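/- arXiv:2503.11997 — 12 statements merged into one kernel-verified Lean document; each statement's English description precedes it below -/
import Mathlib

section
/- For every positive integer d there is a function γ_d : (0,1] → (0,1] such that the following holds: for every set S ⊆ ℝ^d, every α ∈ (0,1], and every finite indexed family B_1, …, B_n of axis-parallel boxes in ℝ^d with n ≥ d+1, if the number of (d+1)-element index sets J ⊆ {1,…,n} with S ∩ ⋂_{j∈J} B_j ≠ ∅ is at least α·C(n,d+1), then there exists J ⊆ {1,…,n} with |J| ≥ γ_d(α)·n and S ∩ ⋂_{j∈J} B_j ≠ ∅. -/
/-- An axis-parallel box in `ℝ^d`: a product of closed intervals `[aᵢ, bᵢ]` with `aᵢ ≤ bᵢ`. -/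
def IsBox {d : ℕ} (B : Set (Fin d → ℝ)) : Prop :=
  ∃ a b : Fin d → ℝ, (∀ i, a i ≤ b i) ∧ B = Set.Icc a b

noncomputable section

namespace FracBoxHelly

open Finset
open scoped Classical

variable {N D : ℕ}

/-- canonical argmax of `fun j => a j c` over `J` -/
noncomputable def argA [Nonempty (Fin N)] (a : Fin N → Fin D → ℝ) (c : Fin D)
    (J : Finset (Fin N)) : Fin N :=
  if h : (J.filter fun j => ∀ i ∈ J, a i c ≤ a j c).Nonempty then
    (J.filter fun j => ∀ i ∈ J, a i c ≤ a j c).min' h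
  else Classical.arbitrary _

/-- canonical argmin of `fun j => b j c` over `J` -/
noncomputable def argB [Nonempty (Fin N)] (b : Fin N → Fin D → ℝ) (c : Fin D)
    (J : Finset (Fin N)) : Fin N :=
  if h : (J.filter fun j => ∀ i ∈ J, b j c ≤ b i c).Nonempty then
    (J.filter fun j => ∀ i ∈ J, b j c ≤ b i c).min' h
  else Classical.arbitrary _

lemma argA_spec [Nonempty (Fin N)] (a : Fin N → Fin D → ℝ) (c : Fin D) {J : Finset (Fin N)}
    (hJ : J.Nonempty) : argA a c J ∈ J ∧ ∀ i ∈ J, a i c ≤ a (argA a c J) c := by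
  obtain ⟨j, hjJ, hj⟩ := J.exists_max_image (fun j => a j c) hJ
  have hne : (J.filter fun j => ∀ i ∈ J, a i c ≤ a j c).Nonempty :=
    ⟨j, mem_filter.2 ⟨hjJ, hj⟩⟩
  rw [argA, dif_pos hne]
  have h := Finset.min'_mem _ hne
  exact ⟨(mem_filter.1 h).1, (mem_filter.1 h).2⟩

lemma argB_spec [Nonempty (Fin N)] (b : Fin N → Fin D → ℝ) (c : Fin D) {J : Finset (Fin N)}
    (hJ : J.Nonempty) : argB b c J ∈ J ∧ ∀ i ∈ J, b (argB b c J) c ≤ b i c := by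
  obtain ⟨j, hjJ, hj⟩ := J.exists_min_image (fun j => b j c) hJ
  have hne : (J.filter fun j => ∀ i ∈ J, b j c ≤ b i c).Nonempty :=
    ⟨j, mem_filter.2 ⟨hjJ, hj⟩⟩
  rw [argB, dif_pos hne]
  have h := Finset.min'_mem _ hne
  exact ⟨(mem_filter.1 h).1, (mem_filter.1 h).2⟩

/-- number of "roles" (coordinatewise argmax of lower corner / argmin of upper corner)
owned by `x` in the tuple `J`. -/
noncomputable def rcount [Nonempty (Fin N)] (a b : Fin N → Fin D → ℝ)
    (J : Finset (Fin N)) (x : Fin N) : ℕ :=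
  ((Finset.univ : Finset (Fin D)).filter fun c => argA a c J = x).card +
  ((Finset.univ : Finset (Fin D)).filter fun c => argB b c J = x).card

lemma exists_low [Nonempty (Fin N)] (a b : Fin N → Fin D → ℝ) {J : Finset (Fin N)}
    (hcard : J.card = D + 1) : ∃ x ∈ J, rcount a b J x ≤ 1 := by
  by_contra hcon
  push_neg at hcon
  have hJne : J.Nonempty := card_pos.1 (by omega)
  have hA : ∑ x ∈ J, ((Finset.univ : Finset (Fin D)).filter fun c => argA a c J = x).card = D := by
    have h := Finset.card_eq_sum_card_fiberwise
      (s := (Finset.univ : Finset (Fin D))) (t := J)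
      (f := fun c => argA a c J) (fun c _ => (argA_spec a c hJne).1)
    simpa using h.symm
  have hB : ∑ x ∈ J, ((Finset.univ : Finset (Fin D)).filter fun c => argB b c J = x).card = D := by
    have h := Finset.card_eq_sum_card_fiberwise
      (s := (Finset.univ : Finset (Fin D))) (t := J)
      (f := fun c => argB b c J) (fun c _ => (argB_spec b c hJne).1)
    simpa using h.symm
  have hsum : ∑ x ∈ J, rcount a b J x = 2 * D := by
    unfold rcount
    rw [Finset.sum_add_distrib, hA, hB]
    omega
  have h2 : 2 * (D + 1) ≤ ∑ x ∈ J, rcount a b J x := by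
    calc 2 * (D + 1) = ∑ _x ∈ J, 2 := by rw [Finset.sum_const, hcard, smul_eq_mul, mul_comm]
    _ ≤ ∑ x ∈ J, rcount a b J x := Finset.sum_le_sum fun x hx => hcon x hx
  omega

/-- canonical element of `J` owning at most one role. -/
noncomputable def xh [Nonempty (Fin N)] (a b : Fin N → Fin D → ℝ) (J : Finset (Fin N)) : Fin N :=
  if h : (J.filter fun x => rcount a b J x ≤ 1).Nonempty then
    (J.filter fun x => rcount a b J x ≤ 1).min' h
  else Classical.arbitrary _

lemma xh_spec [Nonempty (Fin N)] (a b : Fin N → Fin D → ℝ) {J : Finset (Fin N)}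
    (hcard : J.card = D + 1) : xh a b J ∈ J ∧ rcount a b J (xh a b J) ≤ 1 := by
  obtain ⟨x, hx, hrc⟩ := exists_low a b hcard
  have hne : (J.filter fun x => rcount a b J x ≤ 1).Nonempty := ⟨x, mem_filter.2 ⟨hx, hrc⟩⟩
  rw [xh, dif_pos hne]
  have h := Finset.min'_mem _ hne
  exact ⟨(mem_filter.1 h).1, (mem_filter.1 h).2⟩

/-- fiber data of a tuple. -/
noncomputable def psi [Nonempty (Fin N)] (a b : Fin N → Fin D → ℝ) (J : Finset (Fin N)) :
    Finset (Fin N) × (Fin D → Option (Fin N)) × (Fin D → Option (Fin N)) :=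
  (J.erase (xh a b J),
   fun c => if argA a c J = xh a b J then none else some (argA a c J),
   fun c => if argB b c J = xh a b J then none else some (argB b c J))

/-- the finset of good `(D+1)`-tuples. -/
noncomputable def GG (a b : Fin N → Fin D → ℝ) (S : Set (Fin D → ℝ)) :
    Finset (Finset (Fin N)) :=
  Finset.univ.filter fun J =>
    J.card = D + 1 ∧ (S ∩ ⋂ j ∈ J, Set.Icc (a j) (b j)).Nonempty

/-- a chosen witness point for a good tuple. -/
noncomputable def wit (a b : Fin N → Fin D → ℝ) (S : Set (Fin D → ℝ))
    (J : Finset (Fin N)) : Fin D → ℝ :=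
  if h : (S ∩ ⋂ j ∈ J, Set.Icc (a j) (b j)).Nonempty then h.some else fun _ => 0

lemma wit_spec (a b : Fin N → Fin D → ℝ) (S : Set (Fin D → ℝ)) {J : Finset (Fin N)}
    (h : (S ∩ ⋂ j ∈ J, Set.Icc (a j) (b j)).Nonempty) :
    wit a b S J ∈ S ∧ ∀ j ∈ J, ∀ c, a j c ≤ wit a b S J c ∧ wit a b S J c ≤ b j c := by
  rw [wit, dif_pos h]
  obtain ⟨hS, hI⟩ := h.some_mem
  refine ⟨hS, fun j hj c => ?_⟩
  have hj' : h.some ∈ Set.Icc (a j) (b j) := by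
    have := Set.mem_iInter₂.1 hI j hj
    exact this
  exact ⟨hj'.1 c, hj'.2 c⟩

set_option maxHeartbeats 1000000 in
/-- Core extraction: any fiber of `psi` yields a good set of at least its size. -/
lemma extraction [Nonempty (Fin N)] (a b : Fin N → Fin D → ℝ) (S : Set (Fin D → ℝ))
    (φ : Finset (Fin N) × (Fin D → Option (Fin N)) × (Fin D → Option (Fin N)))
    (hne : ((GG a b S).filter fun J => psi a b J = φ).Nonempty) :
    ∃ Jout : Finset (Fin N),
      (S ∩ ⋂ j ∈ Jout, Set.Icc (a j) (b j)).Nonempty ∧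
      ((GG a b S).filter fun J => psi a b J = φ).card ≤ Jout.card := by
  set Fil := (GG a b S).filter fun J => psi a b J = φ with hFil
  have hgood : ∀ J ∈ Fil, J.card = D + 1 ∧ (S ∩ ⋂ j ∈ J, Set.Icc (a j) (b j)).Nonempty :=
    fun J hJ => (mem_filter.1 (mem_filter.1 hJ).1).2
  have hpsi : ∀ J ∈ Fil, psi a b J = φ := fun J hJ => (mem_filter.1 hJ).2
  have hJne : ∀ J ∈ Fil, J.Nonempty := fun J hJ => card_pos.1 (by rw [(hgood J hJ).1]; omega)
  have hxmem : ∀ J ∈ Fil, xh a b J ∈ J := fun J hJ => (xh_spec a b (hgood J hJ).1).1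
  have hxrc : ∀ J ∈ Fil, rcount a b J (xh a b J) ≤ 1 :=
    fun J hJ => (xh_spec a b (hgood J hJ).1).2
  have hD : ∀ J ∈ Fil, J.erase (xh a b J) = φ.1 :=
    fun J hJ => congrArg Prod.fst (hpsi J hJ)
  have hG : ∀ J ∈ Fil, ∀ c,
      (if argA a c J = xh a b J then none else some (argA a c J)) = φ.2.1 c :=
    fun J hJ c => congrFun (congrArg (fun t => t.2.1) (hpsi J hJ)) c
  have hH : ∀ J ∈ Fil, ∀ c,
      (if argB b c J = xh a b J then none else some (argB b c J)) = φ.2.2 c :=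
    fun J hJ c => congrFun (congrArg (fun t => t.2.2) (hpsi J hJ)) c
  have hJeq : ∀ J ∈ Fil, J = insert (xh a b J) φ.1 := by
    intro J hJ
    rw [← hD J hJ, Finset.insert_erase (hxmem J hJ)]
  have hDsub : ∀ J ∈ Fil, φ.1 ⊆ J := by
    intro J hJ
    rw [← hD J hJ]
    exact Finset.erase_subset _ _
  have hGsome : ∀ J ∈ Fil, ∀ c p, φ.2.1 c = some p → argA a c J = p := by
    intro J hJ c p hp
    have h := hG J hJ c
    rw [hp] at h
    by_cases hc : argA a c J = xh a b J
    · rw [if_pos hc] at h; exact absurd h (by simp)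
    · rw [if_neg hc] at h; exact Option.some.inj h
  have hGnone : ∀ J ∈ Fil, ∀ c, φ.2.1 c = none → argA a c J = xh a b J := by
    intro J hJ c hp
    have h := hG J hJ c
    rw [hp] at h
    by_cases hc : argA a c J = xh a b J
    · exact hc
    · rw [if_neg hc] at h; exact absurd h (by simp)
  have hHsome : ∀ J ∈ Fil, ∀ c q, φ.2.2 c = some q → argB b c J = q := by
    intro J hJ c q hq
    have h := hH J hJ c
    rw [hq] at h
    by_cases hc : argB b c J = xh a b J
    · rw [if_pos hc] at h; exact absurd h (by simp)
    · rw [if_neg hc] at h; exact Option.some.inj h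
  have hHnone : ∀ J ∈ Fil, ∀ c, φ.2.2 c = none → argB b c J = xh a b J := by
    intro J hJ c hq
    have h := hH J hJ c
    rw [hq] at h
    by_cases hc : argB b c J = xh a b J
    · exact hc
    · rw [if_neg hc] at h; exact absurd h (by simp)
  -- hole sets
  set CG := (Finset.univ : Finset (Fin D)).filter (fun c => φ.2.1 c = none) with hCGdef
  set CH := (Finset.univ : Finset (Fin D)).filter (fun c => φ.2.2 c = none) with hCHdef
  obtain ⟨J₁, hJ₁⟩ := hne
  have eCG : CG = (Finset.univ : Finset (Fin D)).filter (fun c => argA a c J₁ = xh a b J₁) := by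
    ext c
    simp only [hCGdef, mem_filter, mem_univ, true_and]
    constructor
    · exact hGnone J₁ hJ₁ c
    · intro hc
      have h := hG J₁ hJ₁ c
      rw [if_pos hc] at h
      exact h.symm
  have eCH : CH = (Finset.univ : Finset (Fin D)).filter (fun c => argB b c J₁ = xh a b J₁) := by
    ext c
    simp only [hCHdef, mem_filter, mem_univ, true_and]
    constructor
    · exact hHnone J₁ hJ₁ c
    · intro hc
      have h := hH J₁ hJ₁ c
      rw [if_pos hc] at h
      exact h.symm
  have hCGCH : CG.card + CH.card ≤ 1 := by
    have := hxrc J₁ hJ₁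
    rw [rcount] at this
    rw [eCG, eCH]
    exact this
  -- choice of the distinguished tuple J₀
  obtain ⟨J₀, hJ₀, hmaxA, hminB⟩ :
      ∃ J₀ ∈ Fil,
        (∀ c, φ.2.1 c = none → ∀ J' ∈ Fil, a (xh a b J') c ≤ a (xh a b J₀) c) ∧
        (∀ c, φ.2.2 c = none → ∀ J' ∈ Fil, b (xh a b J₀) c ≤ b (xh a b J') c) := by
    by_cases hCG : CG.Nonempty
    · obtain ⟨c₁, hc₁⟩ := hCG
      have hc₁' : φ.2.1 c₁ = none := (mem_filter.1 hc₁).2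
      obtain ⟨J₀, hJ₀, hmax⟩ := Fil.exists_max_image (fun J => a (xh a b J) c₁) ⟨J₁, hJ₁⟩
      refine ⟨J₀, hJ₀, ?_, ?_⟩
      · intro c hc J' hJ'
        have hcCG : c ∈ CG := mem_filter.2 ⟨mem_univ _, hc⟩
        have : c = c₁ := by
          have hle : CG.card ≤ 1 := by omega
          exact Finset.card_le_one.1 hle c hcCG c₁ hc₁
        rw [this]
        exact hmax J' hJ'
      · intro c hc J' hJ'
        exfalso
        have hcCH : c ∈ CH := mem_filter.2 ⟨mem_univ _, hc⟩
        have h1 : 1 ≤ CG.card := Finset.card_pos.2 ⟨c₁, hc₁⟩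
        have h2 : 1 ≤ CH.card := Finset.card_pos.2 ⟨c, hcCH⟩
        omega
    · by_cases hCH : CH.Nonempty
      · obtain ⟨c₁, hc₁⟩ := hCH
        have hc₁' : φ.2.2 c₁ = none := (mem_filter.1 hc₁).2
        obtain ⟨J₀, hJ₀, hmin⟩ := Fil.exists_min_image (fun J => b (xh a b J) c₁) ⟨J₁, hJ₁⟩
        refine ⟨J₀, hJ₀, ?_, ?_⟩
        · intro c hc J' hJ'
          exact absurd ⟨c, mem_filter.2 ⟨mem_univ _, hc⟩⟩ hCG
        · intro c hc J' hJ'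
          have hcCH : c ∈ CH := mem_filter.2 ⟨mem_univ _, hc⟩
          have hle : CH.card ≤ 1 := by omega
          have : c = c₁ := Finset.card_le_one.1 hle c hcCH c₁ hc₁
          rw [this]
          exact hmin J' hJ'
      · refine ⟨J₁, hJ₁, ?_, ?_⟩
        · intro c hc J' hJ'
          exact absurd ⟨c, mem_filter.2 ⟨mem_univ _, hc⟩⟩ hCG
        · intro c hc J' hJ'
          exact absurd ⟨c, mem_filter.2 ⟨mem_univ _, hc⟩⟩ hCH
  -- the common witness
  set s₀ := wit a b S J₀ with hs₀def
  obtain ⟨hs₀S, hs₀B⟩ := wit_spec a b S (hgood J₀ hJ₀).2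
  set Jout := φ.1 ∪ Fil.image (xh a b) with hJoutdef
  have haupt : ∀ j ∈ Jout, ∀ c, a j c ≤ s₀ c ∧ s₀ c ≤ b j c := by
    intro j hj c
    have hjcase : j ∈ φ.1 ∨ ∃ J' ∈ Fil, xh a b J' = j := by
      rcases Finset.mem_union.1 hj with h | h
      · exact Or.inl h
      · obtain ⟨J', hJ', hx⟩ := Finset.mem_image.1 h
        exact Or.inr ⟨J', hJ', hx⟩
    constructor
    · -- lower bounds
      cases hφc : φ.2.1 c with
      | some p =>
        have hpJ₀ : argA a c J₀ = p := hGsome J₀ hJ₀ c p hφc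
        have hpmem : p ∈ J₀ := hpJ₀ ▸ (argA_spec a c (hJne J₀ hJ₀)).1
        have h1 : a p c ≤ s₀ c := (hs₀B p hpmem c).1
        have h2 : a j c ≤ a p c := by
          rcases hjcase with hjD | ⟨J', hJ', hx⟩
          · have hjJ₀ : j ∈ J₀ := hDsub J₀ hJ₀ hjD
            have := (argA_spec a c (hJne J₀ hJ₀)).2 j hjJ₀
            rwa [hpJ₀] at this
          · have hjJ' : j ∈ J' := hx ▸ hxmem J' hJ'
            have hpJ' : argA a c J' = p := hGsome J' hJ' c p hφc
            have := (argA_spec a c (hJne J' hJ')).2 j hjJ'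
            rwa [hpJ'] at this
        linarith
      | none =>
        have hxJ₀ : argA a c J₀ = xh a b J₀ := hGnone J₀ hJ₀ c hφc
        have h1 : a (xh a b J₀) c ≤ s₀ c := (hs₀B _ (hxmem J₀ hJ₀) c).1
        have h2 : a j c ≤ a (xh a b J₀) c := by
          rcases hjcase with hjD | ⟨J', hJ', hx⟩
          · have hjJ₀ : j ∈ J₀ := hDsub J₀ hJ₀ hjD
            have := (argA_spec a c (hJne J₀ hJ₀)).2 j hjJ₀
            rwa [hxJ₀] at this
          · rw [← hx]
            exact hmaxA c hφc J' hJ'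
        linarith
    · -- upper bounds
      cases hφc : φ.2.2 c with
      | some q =>
        have hqJ₀ : argB b c J₀ = q := hHsome J₀ hJ₀ c q hφc
        have hqmem : q ∈ J₀ := hqJ₀ ▸ (argB_spec b c (hJne J₀ hJ₀)).1
        have h1 : s₀ c ≤ b q c := (hs₀B q hqmem c).2
        have h2 : b q c ≤ b j c := by
          rcases hjcase with hjD | ⟨J', hJ', hx⟩
          · have hjJ₀ : j ∈ J₀ := hDsub J₀ hJ₀ hjD
            have := (argB_spec b c (hJne J₀ hJ₀)).2 j hjJ₀
            rwa [hqJ₀] at this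
          · have hjJ' : j ∈ J' := hx ▸ hxmem J' hJ'
            have hqJ' : argB b c J' = q := hHsome J' hJ' c q hφc
            have := (argB_spec b c (hJne J' hJ')).2 j hjJ'
            rwa [hqJ'] at this
        linarith
      | none =>
        have hxJ₀ : argB b c J₀ = xh a b J₀ := hHnone J₀ hJ₀ c hφc
        have h1 : s₀ c ≤ b (xh a b J₀) c := (hs₀B _ (hxmem J₀ hJ₀) c).2
        have h2 : b (xh a b J₀) c ≤ b j c := by
          rcases hjcase with hjD | ⟨J', hJ', hx⟩
          · have hjJ₀ : j ∈ J₀ := hDsub J₀ hJ₀ hjD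
            have := (argB_spec b c (hJne J₀ hJ₀)).2 j hjJ₀
            rwa [hxJ₀] at this
          · rw [← hx]
            exact hminB c hφc J' hJ'
        linarith
  refine ⟨Jout, ⟨s₀, hs₀S, ?_⟩, ?_⟩
  · refine Set.mem_iInter₂.2 fun j hj => ?_
    exact Set.mem_Icc.2 ⟨fun c => (haupt j hj c).1, fun c => (haupt j hj c).2⟩
  · have hinj : Set.InjOn (xh a b) Fil := by
      intro J hJ J' hJ' heq
      have h1 := hJeq J (by simpa using hJ)
      have h2 := hJeq J' (by simpa using hJ')
      rw [h1, h2, heq]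
    calc Fil.card = (Fil.image (xh a b)).card := (Finset.card_image_of_injOn hinj).symm
    _ ≤ Jout.card := Finset.card_le_card Finset.subset_union_right

set_option maxHeartbeats 1000000 in
/-- Master counting lemma: there is a good set `Jout` with
`#good tuples ≤ C(N,D) * (D+1)^(2D) * |Jout|`. -/
lemma master [Nonempty (Fin N)] (a b : Fin N → Fin D → ℝ) (S : Set (Fin D → ℝ))
    (hGne : (GG a b S).Nonempty) :
    ∃ Jout : Finset (Fin N),
      (S ∩ ⋂ j ∈ Jout, Set.Icc (a j) (b j)).Nonempty ∧
      (GG a b S).card ≤ N.choose D * ((D + 1) ^ (2 * D)) * Jout.card := by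
  set TΩ : Finset (Finset (Fin N) × (Fin D → Option (Fin N)) × (Fin D → Option (Fin N))) :=
    (Finset.univ.powersetCard D).biUnion (fun E =>
      ({E} : Finset (Finset (Fin N))) ×ˢ
      (Fintype.piFinset fun _ : Fin D => insert none (E.image some)) ×ˢ
      (Fintype.piFinset fun _ : Fin D => insert none (E.image some))) with hTΩ
  have hpsiMem : ∀ J ∈ GG a b S, psi a b J ∈ TΩ := by
    intro J hJ
    have hgood := (mem_filter.1 hJ).2
    have hcard : J.card = D + 1 := hgood.1
    have hJne : J.Nonempty := card_pos.1 (by omega)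
    have hx := xh_spec a b hcard
    have hE : (J.erase (xh a b J)).card = D := by
      rw [Finset.card_erase_of_mem hx.1, hcard]
      omega
    refine Finset.mem_biUnion.2 ⟨J.erase (xh a b J), ?_, ?_⟩
    · exact Finset.mem_powersetCard.2 ⟨Finset.subset_univ _, hE⟩
    · refine Finset.mem_product.2 ⟨Finset.mem_singleton_self _, ?_⟩
      refine Finset.mem_product.2 ⟨?_, ?_⟩
      · refine Fintype.mem_piFinset.2 fun c => ?_
        by_cases hc : argA a c J = xh a b J
        · simp [psi, hc]
        · have hmem : argA a c J ∈ J.erase (xh a b J) :=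
            Finset.mem_erase.2 ⟨hc, (argA_spec a c hJne).1⟩
          simp only [psi, if_neg hc]
          exact Finset.mem_insert.2 (Or.inr (Finset.mem_image_of_mem some hmem))
      · refine Fintype.mem_piFinset.2 fun c => ?_
        by_cases hc : argB b c J = xh a b J
        · simp [psi, hc]
        · have hmem : argB b c J ∈ J.erase (xh a b J) :=
            Finset.mem_erase.2 ⟨hc, (argB_spec b c hJne).1⟩
          simp only [psi, if_neg hc]
          exact Finset.mem_insert.2 (Or.inr (Finset.mem_image_of_mem some hmem))
  have hTΩcard : TΩ.card ≤ N.choose D * ((D + 1) ^ (2 * D)) := by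
    calc TΩ.card ≤ ∑ E ∈ Finset.univ.powersetCard D,
        (({E} : Finset (Finset (Fin N))) ×ˢ
        (Fintype.piFinset fun _ : Fin D => insert none (E.image some)) ×ˢ
        (Fintype.piFinset fun _ : Fin D => insert none (E.image some))).card :=
          Finset.card_biUnion_le
    _ ≤ ∑ _E ∈ Finset.univ.powersetCard D, (D + 1) ^ (2 * D) := by
        refine Finset.sum_le_sum fun E hE => ?_
        have hEcard : E.card = D := (Finset.mem_powersetCard.1 hE).2
        have hpi : (Fintype.piFinset fun _ : Fin D =>
            insert none (E.image some)).card ≤ (D + 1) ^ D := by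
          rw [Fintype.card_piFinset]
          calc ∏ _c : Fin D, (insert none (E.image some)).card
              ≤ ∏ _c : Fin D, (D + 1) := by
                refine Finset.prod_le_prod (fun _ _ => Nat.zero_le _) fun c _ => ?_
                calc (insert none (E.image some)).card
                    ≤ (E.image some).card + 1 := Finset.card_insert_le _ _
                  _ ≤ E.card + 1 := by
                      have := Finset.card_image_le (s := E) (f := some)
                      omega
                  _ = D + 1 := by rw [hEcard]
          _ = (D + 1) ^ D := by rw [Finset.prod_const, Finset.card_univ, Fintype.card_fin]
        calc (({E} : Finset (Finset (Fin N))) ×ˢ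
            (Fintype.piFinset fun _ : Fin D => insert none (E.image some)) ×ˢ
            (Fintype.piFinset fun _ : Fin D => insert none (E.image some))).card
            = 1 * ((Fintype.piFinset fun _ : Fin D => insert none (E.image some)).card *
              (Fintype.piFinset fun _ : Fin D => insert none (E.image some)).card) := by
              rw [Finset.card_product, Finset.card_product, Finset.card_singleton]
          _ ≤ 1 * ((D + 1) ^ D * (D + 1) ^ D) := by
              apply Nat.mul_le_mul_left
              exact Nat.mul_le_mul hpi hpi
          _ = (D + 1) ^ (2 * D) := by rw [one_mul, ← pow_add]; ring_nf
    _ = (Finset.univ.powersetCard D).card * (D + 1) ^ (2 * D) := by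
        rw [Finset.sum_const, smul_eq_mul]
    _ = N.choose D * (D + 1) ^ (2 * D) := by
        rw [Finset.card_powersetCard, Finset.card_univ, Fintype.card_fin]
  -- fiber decomposition
  have hdecomp : (GG a b S).card =
      ∑ φ ∈ TΩ, ((GG a b S).filter fun J => psi a b J = φ).card :=
    Finset.card_eq_sum_card_fiberwise hpsiMem
  set K := TΩ.sup (fun φ => ((GG a b S).filter fun J => psi a b J = φ).card) with hK
  have hsumK : (GG a b S).card ≤ TΩ.card * K := by
    rw [hdecomp]
    have := Finset.sum_le_card_nsmul TΩ
      (fun φ => ((GG a b S).filter fun J => psi a b J = φ).card) K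
      (fun φ _ => Finset.le_sup (f := fun φ =>
        ((GG a b S).filter fun J => psi a b J = φ).card) ‹φ ∈ TΩ›)
    simpa [smul_eq_mul] using this
  -- the maximal fiber
  obtain ⟨J₁, hJ₁⟩ := hGne
  have hTΩne : TΩ.Nonempty := ⟨psi a b J₁, hpsiMem J₁ hJ₁⟩
  obtain ⟨φm, hφm, hφmK⟩ := Finset.exists_mem_eq_sup TΩ hTΩne
    (fun φ => ((GG a b S).filter fun J => psi a b J = φ).card)
  have hKfil : ((GG a b S).filter fun J => psi a b J = φm).card = K := hφmK.symm
  have hKpos : 1 ≤ K := by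
    have h1 : J₁ ∈ (GG a b S).filter fun J => psi a b J = psi a b J₁ :=
      mem_filter.2 ⟨hJ₁, rfl⟩
    have h2 : 1 ≤ ((GG a b S).filter fun J => psi a b J = psi a b J₁).card :=
      Finset.card_pos.2 ⟨J₁, h1⟩
    exact le_trans h2 (Finset.le_sup (f := fun φ =>
      ((GG a b S).filter fun J => psi a b J = φ).card) (hpsiMem J₁ hJ₁))
  have hFilne : ((GG a b S).filter fun J => psi a b J = φm).Nonempty := by
    rw [← Finset.card_pos, hKfil]; omega
  obtain ⟨Jout, hJoutne, hJoutcard⟩ := extraction a b S φm hFilne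
  refine ⟨Jout, hJoutne, ?_⟩
  calc (GG a b S).card ≤ TΩ.card * K := hsumK
    _ ≤ (N.choose D * ((D + 1) ^ (2 * D))) * K := Nat.mul_le_mul_right _ hTΩcard
    _ ≤ (N.choose D * ((D + 1) ^ (2 * D))) * Jout.card := by
        apply Nat.mul_le_mul_left
        rw [← hKfil]
        exact hJoutcard

end FracBoxHelly

set_option maxHeartbeats 1000000 in
theorem fractional_S_helly_for_d_plus_one_tuples (d : ℕ) (hd : 0 < d) :
    ∃ γ : ℝ → ℝ, (∀ α ∈ Set.Ioc (0 : ℝ) 1, γ α ∈ Set.Ioc (0 : ℝ) 1) ∧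
      ∀ (S : Set (Fin d → ℝ)) (α : ℝ), α ∈ Set.Ioc (0 : ℝ) 1 →
        ∀ (n : ℕ), d + 1 ≤ n → ∀ (B : Fin n → Set (Fin d → ℝ)), (∀ j, IsBox (B j)) →
          α * (n.choose (d + 1) : ℕ) ≤
            ({J : Finset (Fin n) | J.card = d + 1 ∧ (S ∩ ⋂ j ∈ J, B j).Nonempty}.ncard : ℕ) →
          ∃ J : Finset (Fin n), γ α * n ≤ (J.card : ℝ) ∧ (S ∩ ⋂ j ∈ J, B j).Nonempty := by
  classical
  have hden : (0:ℝ) < ((d:ℝ) + 1) ^ (2 * d + 2) := by positivity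
  have hden1 : (1:ℝ) ≤ ((d:ℝ) + 1) ^ (2 * d + 2) := by
    apply one_le_pow₀
    have : (0:ℝ) ≤ (d:ℝ) := Nat.cast_nonneg d
    linarith
  refine ⟨fun α => α / ((d:ℝ) + 1) ^ (2 * d + 2), ?_, ?_⟩
  · intro α hα
    constructor
    · exact div_pos hα.1 hden
    · rw [div_le_one hden]
      exact le_trans hα.2 hden1
  · intro S α hα n hn B hBox hyp
    choose a b hab hBeq using hBox
    have hBfun : B = fun j => Set.Icc (a j) (b j) := funext hBeq
    subst hBfun
    haveI : Nonempty (Fin n) := ⟨⟨0, by omega⟩⟩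
    have hset : {J : Finset (Fin n) | J.card = d + 1 ∧
        (S ∩ ⋂ j ∈ J, Set.Icc (a j) (b j)).Nonempty} = ↑(FracBoxHelly.GG a b S) := by
      ext J
      simp [FracBoxHelly.GG]
    have hyp' : α * (n.choose (d + 1) : ℝ) ≤ ((FracBoxHelly.GG a b S).card : ℝ) := by
      have hc : ({J : Finset (Fin n) | J.card = d + 1 ∧
          (S ∩ ⋂ j ∈ J, Set.Icc (a j) (b j)).Nonempty}).ncard
          = (FracBoxHelly.GG a b S).card := by
        rw [hset, Set.ncard_coe_finset]
      calc α * (n.choose (d + 1) : ℝ)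
          ≤ (({J : Finset (Fin n) | J.card = d + 1 ∧
              (S ∩ ⋂ j ∈ J, Set.Icc (a j) (b j)).Nonempty}).ncard : ℝ) := hyp
        _ = ((FracBoxHelly.GG a b S).card : ℝ) := by rw [hc]
    have hd1n : d + 1 ≤ n := hn
    have hdn : d ≤ n := by omega
    have hchoosepos : 0 < n.choose (d + 1) := Nat.choose_pos hd1n
    have hGGpos : 0 < (FracBoxHelly.GG a b S).card := by
      have h0 : (0:ℝ) < α * (n.choose (d + 1) : ℝ) := by
        apply mul_pos hα.1
        exact_mod_cast hchoosepos
      have := lt_of_lt_of_le h0 hyp'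
      exact_mod_cast this
    have hGne : (FracBoxHelly.GG a b S).Nonempty := Finset.card_pos.1 hGGpos
    obtain ⟨Jout, hJoutne, hcount⟩ := FracBoxHelly.master a b S hGne
    refine ⟨Jout, ?_, by simpa using hJoutne⟩
    -- arithmetic
    set Cd1 : ℝ := (n.choose (d + 1) : ℝ) with hCd1
    set Cd : ℝ := (n.choose d : ℝ) with hCd
    set P : ℝ := ((d:ℝ) + 1) ^ (2 * d) with hP
    set Jc : ℝ := (Jout.card : ℝ) with hJc
    set G : ℝ := ((FracBoxHelly.GG a b S).card : ℝ) with hG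
    have hA2 : G ≤ Cd * P * Jc := by
      rw [hG, hCd, hP, hJc]
      exact_mod_cast hcount
    have hA3 : Cd1 * ((d:ℝ) + 1) = Cd * ((n:ℝ) - (d:ℝ)) := by
      have hnat := Nat.choose_succ_right_eq n d
      have h2 : ((n.choose (d+1) * (d+1) : ℕ) : ℝ) = ((n.choose d * (n - d) : ℕ) : ℝ) := by
        rw [hnat]
      rw [hCd1, hCd]
      push_cast [Nat.cast_sub hdn] at h2
      linarith
    have hA4 : (n:ℝ) ≤ ((d:ℝ) + 1) * ((n:ℝ) - (d:ℝ)) := by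
      have h1 : 1 ≤ n - d := by omega
      have h2 : d * 1 ≤ d * (n - d) := Nat.mul_le_mul_left d h1
      have h3 : n ≤ (d + 1) * (n - d) := by
        have : (d + 1) * (n - d) = d * (n - d) + (n - d) := by ring
        omega
      have := (Nat.cast_le (α := ℝ)).2 h3
      push_cast [Nat.cast_sub hdn] at this
      linarith
    have hA5 : (0:ℝ) < Cd := by
      rw [hCd]
      exact_mod_cast Nat.choose_pos hdn
    have hJcnn : (0:ℝ) ≤ Jc := by rw [hJc]; positivity
    have key : α * ((n:ℝ) - (d:ℝ)) ≤ ((d:ℝ) + 1) ^ (2 * d + 1) * Jc := by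
      have h4 : α * ((n:ℝ) - (d:ℝ)) * Cd ≤ (((d:ℝ) + 1) ^ (2 * d + 1) * Jc) * Cd := by
        calc α * ((n:ℝ) - (d:ℝ)) * Cd = ((d:ℝ) + 1) * (α * Cd1) := by
              linear_combination (-α) * hA3
          _ ≤ ((d:ℝ) + 1) * G := by
              apply mul_le_mul_of_nonneg_left _ (by positivity)
              exact hyp'
          _ ≤ ((d:ℝ) + 1) * (Cd * P * Jc) := by
              apply mul_le_mul_of_nonneg_left hA2 (by positivity)
          _ = (((d:ℝ) + 1) ^ (2 * d + 1) * Jc) * Cd := by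
              rw [pow_succ, hP]; ring
      exact le_of_mul_le_mul_right h4 hA5
    have final : α * (n:ℝ) ≤ ((d:ℝ) + 1) ^ (2 * d + 2) * Jc := by
      calc α * (n:ℝ) ≤ α * (((d:ℝ) + 1) * ((n:ℝ) - (d:ℝ))) := by
            apply mul_le_mul_of_nonneg_left hA4 hα.1.le
        _ = ((d:ℝ) + 1) * (α * ((n:ℝ) - (d:ℝ))) := by ring
        _ ≤ ((d:ℝ) + 1) * (((d:ℝ) + 1) ^ (2 * d + 1) * Jc) := by
            apply mul_le_mul_of_nonneg_left key (by positivity)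
        _ = ((d:ℝ) + 1) ^ (2 * d + 2) * Jc := by rw [pow_succ]; ring
    rw [div_mul_eq_mul_div, div_le_iff₀ hden]
    calc α * (n:ℝ) ≤ ((d:ℝ) + 1) ^ (2 * d + 2) * Jc := final
      _ = Jc * ((d:ℝ) + 1) ^ (2 * d + 2) := by ring

end
end

section
/- For every positive integer d, every α ∈ (0,1], every set S ⊆ ℝ^d, and every finite indexed family B_1, …, B_n of axis-parallel boxes in ℝ^d with n ≥ 2d, if the number of 2d-element index sets J ⊆ {1,…,n} with S ∩ ⋂_{j∈J} B_j ≠ ∅ is at least α·C(n,2d), then there exists J ⊆ {1,…,n} with |J| ≥ (1 − (1−α)^{1/(2d)})·n and S ∩ ⋂_{j∈J} B_j ≠ ∅. -/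
open Finset

section Dominance

variable {α ι β : Type*} [Fintype ι] [LinearOrder β]

def coordUpperClosure (V : Finset α) (w : ι → α → β) (J : Finset α) : Finset α :=
  {y ∈ V | ∀ i, ∃ x ∈ J, w i x ≤ w i y}

@[simp]
lemma mem_coordUpperClosure {V J : Finset α} {w : ι → α → β} {y : α} :
    y ∈ coordUpperClosure V w J ↔ y ∈ V ∧ ∀ i, ∃ x ∈ J, w i x ≤ w i y :=
  mem_filter

def subsetsWithLargeClosure (V : Finset α) (w : ι → α → β) (m : ℕ) : Finset (Finset α) :=
  {J ∈ V.powersetCard (Fintype.card ι) | m ≤ #(coordUpperClosure V w J)}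

lemma mem_subsetsWithLargeClosure {V J : Finset α} {w : ι → α → β} {m : ℕ} :
    J ∈ subsetsWithLargeClosure V w m ↔
      J ⊆ V ∧ #J = Fintype.card ι ∧ m ≤ #(coordUpperClosure V w J) := by
  rw [subsetsWithLargeClosure, mem_filter, mem_powersetCard, and_assoc]

lemma subsetsWithLargeClosure_comp_equiv {ι' : Type*} [Fintype ι'] (e : ι' ≃ ι)
    (V : Finset α) (w : ι → α → β) (m : ℕ) :
    subsetsWithLargeClosure V (w ∘ e) m = subsetsWithLargeClosure V w m := by
  have : coordUpperClosure V (w ∘ e) = coordUpperClosure V w := by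
    ext J y
    simp only [mem_coordUpperClosure, Function.comp_apply, e.forall_congr_left,
      e.apply_symm_apply]
  ext J
  simp only [mem_subsetsWithLargeClosure, this, Fintype.card_congr e]

lemma subsetsWithLargeClosure_mono {V V' : Finset α} (hV : V ⊆ V') (w : ι → α → β)
    (m : ℕ) :
    subsetsWithLargeClosure V w m ⊆ subsetsWithLargeClosure V' w m := by
  intro J hJ
  rw [mem_subsetsWithLargeClosure] at hJ ⊢
  refine ⟨hJ.1.trans hV, hJ.2.1, hJ.2.2.trans (card_le_card fun y hy => ?_)⟩
  rw [mem_coordUpperClosure] at hy ⊢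
  exact ⟨hV hy.1, hy.2⟩

lemma insert_mem_subsetsWithLargeClosure [DecidableEq α] {a : α} {s K : Finset α}
    {w : Option ι → α → β} {m : ℕ} (ha : a ∉ s) (hmin : ∀ x ∈ s, w none a ≤ w none x)
    (hK : K ∈ subsetsWithLargeClosure s (w ∘ some) m) :
    insert a K ∈ subsetsWithLargeClosure (insert a s) w (m + 1) := by
  rw [mem_subsetsWithLargeClosure] at hK ⊢
  obtain ⟨hKs, hKcard, hKclosure⟩ := hK
  have hsub : insert a (coordUpperClosure s (w ∘ some) K) ⊆
      coordUpperClosure (insert a s) w (insert a K) := by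
    intro y hy
    rw [mem_coordUpperClosure]
    rcases mem_insert.1 hy with rfl | hy
    · exact ⟨mem_insert_self _ _, fun i => ⟨y, mem_insert_self _ _, le_rfl⟩⟩
    · obtain ⟨hys, hyK⟩ := mem_coordUpperClosure.1 hy
      refine ⟨mem_insert_of_mem hys, fun i => ?_⟩
      cases i with
      | none => exact ⟨a, mem_insert_self _ _, hmin y hys⟩
      | some i =>
        obtain ⟨x, hxK, hxy⟩ := hyK i
        exact ⟨x, mem_insert_of_mem hxK, hxy⟩
  have ha' : a ∉ coordUpperClosure s (w ∘ some) K :=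
    fun h => ha (mem_coordUpperClosure.1 h).1
  refine ⟨insert_subset_insert a hKs, ?_, ?_⟩
  · rw [card_insert_of_notMem (fun h => ha (hKs h)), hKcard, Fintype.card_option]
  · calc m + 1 ≤ #(insert a (coordUpperClosure s (w ∘ some) K)) := by
          rw [card_insert_of_notMem ha']; omega
      _ ≤ _ := card_le_card hsub

lemma card_add_card_le_card_subsetsWithLargeClosure_insert [DecidableEq α] {a : α} {s : Finset α}
    {w : Option ι → α → β} {m : ℕ} (ha : a ∉ s) (hmin : ∀ x ∈ s, w none a ≤ w none x) :
    #(subsetsWithLargeClosure s w (m + 1)) + #(subsetsWithLargeClosure s (w ∘ some) m) ≤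
      #(subsetsWithLargeClosure (insert a s) w (m + 1)) := by
  have hinj :
      Set.InjOn (insert a) (subsetsWithLargeClosure s (w ∘ some) m : Set (Finset α)) :=
    fun K hK L hL h => by
      have hK := (mem_subsetsWithLargeClosure.1 hK).1
      have hL := (mem_subsetsWithLargeClosure.1 hL).1
      rw [← erase_insert (fun h => ha (hK h)), ← erase_insert (fun h => ha (hL h)), h]
  have hdisj : Disjoint (subsetsWithLargeClosure s w (m + 1))
      ((subsetsWithLargeClosure s (w ∘ some) m).image (insert a)) := by
    rw [disjoint_right]
    rintro _ hJ hJs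
    obtain ⟨K, -, rfl⟩ := mem_image.1 hJ
    exact ha ((mem_subsetsWithLargeClosure.1 hJs).1 (mem_insert_self a K))
  rw [← card_image_of_injOn hinj, ← card_union_of_disjoint hdisj]
  refine card_le_card (union_subset (subsetsWithLargeClosure_mono (subset_insert a s) w _)
    (image_subset_iff.2 fun K hK => insert_mem_subsetsWithLargeClosure ha hmin hK))

-- Phrased with `#V = t + m` since the truncated form `C(#V - m + k, k)` fails for `k = 0`,
-- `#V < m`.
theorem choose_le_card_subsetsWithLargeClosure [DecidableEq α]
    {m t : ℕ} (hm : Fintype.card ι ≤ m) {V : Finset α} (hV : #V = t + m) (w : ι → α → β) :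
    (t + Fintype.card ι).choose (Fintype.card ι) ≤ #(subsetsWithLargeClosure V w m) := by
  revert m t V w
  refine Fintype.induction_empty_option (P := fun ι _ => ∀ {m t : ℕ}, Fintype.card ι ≤ m →
    ∀ {V : Finset α}, #V = t + m → ∀ w : ι → α → β,
      (t + Fintype.card ι).choose (Fintype.card ι) ≤ #(subsetsWithLargeClosure V w m))
    ?_ ?_ ?_ ι
  · intro ι ι' _ e ih m t hm V hV w
    let _ : Fintype ι := Fintype.ofEquiv ι' e.symm
    rw [← subsetsWithLargeClosure_comp_equiv e, ← Fintype.card_congr e]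
    exact ih (Fintype.card_congr e ▸ hm) hV _
  · intro m t hm V hV w
    rw [Fintype.card_eq_zero, Nat.choose_zero_right, one_le_card]
    refine ⟨∅, mem_subsetsWithLargeClosure.2 ⟨empty_subset V, by simp, ?_⟩⟩
    have : coordUpperClosure V w ∅ = V := by ext; simp
    rw [this]
    omega
  · intro ι _ ih m t hm V hV w
    obtain ⟨m, rfl⟩ : ∃ m', m = m' + 1 := ⟨m - 1, by rw [Fintype.card_option] at hm; omega⟩
    rw [Fintype.card_option] at hm ⊢
    induction V using Finset.induction_on_min_value (w none) generalizing t with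
    | empty => simp at hV
    | insert a s ha hmin ihs =>
      rw [card_insert_of_notMem ha] at hV
      refine le_trans ?_ (card_add_card_le_card_subsetsWithLargeClosure_insert ha hmin)
      rw [← add_assoc, Nat.choose_succ_succ', add_comm]
      refine add_le_add ?_ (ih (by omega) (by omega) _)
      cases t with
      | zero => simp
      | succ t => exact le_of_eq_of_le (by ring_nf) (ihs (t := t) (by omega))

end Dominance

lemma sub_div_pow_le_of_choose_le {n m t r : ℕ} {γ : ℝ} (hn : n = t + (m + 1))
    (h : ((t + r).choose r : ℝ) ≤ γ * n.choose r) : (((n : ℝ) - m) / n) ^ r ≤ γ := by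
  subst hn
  push_cast
  rw [show (t : ℝ) + (m + 1) - m = t + 1 by ring, ← add_assoc]
  rw [← add_assoc] at h
  have hlower : ((t : ℝ) + 1) ^ r / r.factorial ≤ (t + r).choose r := by
    have := Nat.pow_le_choose (α := ℝ) r (t + r)
    rwa [show t + r + 1 - r = t + 1 by omega, Nat.cast_succ] at this
  have hupper : ((t + m + 1).choose r : ℝ) ≤ ((t : ℝ) + m + 1) ^ r / r.factorial := by
    exact_mod_cast Nat.choose_le_pow_div (α := ℝ) r (t + m + 1)
  have hγ : 0 ≤ γ := by
    by_contra! hγ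
    have hC : (0 : ℝ) < (t + r).choose r := by exact_mod_cast Nat.choose_pos (by omega)
    nlinarith [mul_nonpos_of_nonpos_of_nonneg hγ.le (Nat.cast_nonneg ((t + m + 1).choose r))]
  rw [div_pow, div_le_iff₀ (by positivity)]
  calc ((t : ℝ) + 1) ^ r = r.factorial * (((t : ℝ) + 1) ^ r / r.factorial) := by field_simp
    _ ≤ r.factorial * (γ * (((t : ℝ) + m + 1) ^ r / r.factorial)) := by
      gcongr
      exact hlower.trans (h.trans (by gcongr))
    _ = γ * ((t : ℝ) + m + 1) ^ r := by field_simp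

lemma one_sub_rpow_mul_le {n m r : ℕ} {γ : ℝ} (hr : 0 < r) (hm : m ≤ n)
    (h : (((n : ℝ) - m) / n) ^ r ≤ γ) : (1 - γ ^ ((1 : ℝ) / r)) * n ≤ m := by
  have hx : 0 ≤ ((n : ℝ) - m) / n := div_nonneg (by simpa using hm) (Nat.cast_nonneg n)
  have : ((n : ℝ) - m) / n ≤ γ ^ ((1 : ℝ) / r) := by
    rw [one_div, ← Real.pow_rpow_inv_natCast hx hr.ne']
    exact Real.rpow_le_rpow (by positivity) h (by positivity)
  rcases n.eq_zero_or_pos with rfl | hn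
  · simp
  rw [div_le_iff₀ (by positivity)] at this
  linarith

lemma card_filter_and_not_le {γ : Type*} [Fintype γ] {P Q : γ → Prop} [DecidablePred P]
    [DecidablePred Q] {α : ℝ} (h : α * #{x | P x} ≤ #{x | P x ∧ Q x}) :
    (#{x | P x ∧ ¬Q x} : ℝ) ≤ (1 - α) * #{x | P x} := by
  have := card_filter_add_card_filter_not (s := {x | P x}) Q
  simp only [filter_filter] at this
  rw [← this] at h ⊢
  push_cast at h ⊢
  linarith

section Boxes

variable {α ι : Type*} [Fintype ι]

def boxFaceWeights (a b : α → ι → ℝ) : ι ⊕ ι → α → ℝ :=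
  Sum.elim (fun c j => -a j c) (fun c j => b j c)

lemma nonempty_inter_biInter_coordUpperClosure {S : Set (ι → ℝ)} {a b : α → ι → ℝ}
    {V J : Finset α} (h : (S ∩ ⋂ j ∈ J, Set.Icc (a j) (b j)).Nonempty) :
    (S ∩ ⋂ j ∈ coordUpperClosure V (boxFaceWeights a b) J, Set.Icc (a j) (b j)).Nonempty := by
  obtain ⟨p, hpS, hpJ⟩ := h
  simp only [Set.mem_iInter₂, Set.mem_Icc] at hpJ
  refine ⟨p, hpS, Set.mem_iInter₂.2 fun y hy => ⟨fun c => ?_, fun c => ?_⟩⟩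
  · obtain ⟨x, hxJ, hxy⟩ := (mem_coordUpperClosure.1 hy).2 (.inl c)
    have := (hpJ x hxJ).1 c
    simp only [boxFaceWeights, Sum.elim_inl, neg_le_neg_iff] at hxy
    linarith
  · obtain ⟨x, hxJ, hxy⟩ := (mem_coordUpperClosure.1 hy).2 (.inr c)
    have := (hpJ x hxJ).2 c
    simp only [boxFaceWeights, Sum.elim_inr] at hxy
    linarith

open scoped Classical in
lemma choose_le_card_filter_not_nonempty [Fintype α] {S : Set (ι → ℝ)}
    {a b : α → ι → ℝ} {m t : ℕ} (hm : 2 * Fintype.card ι ≤ m)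
    (hmax : ∀ J : Finset α, (S ∩ ⋂ j ∈ J, Set.Icc (a j) (b j)).Nonempty → #J ≤ m)
    (hcard : Fintype.card α = t + (m + 1)) :
    (t + 2 * Fintype.card ι).choose (2 * Fintype.card ι) ≤
      #{J : Finset α | #J = 2 * Fintype.card ι ∧
        ¬(S ∩ ⋂ j ∈ J, Set.Icc (a j) (b j)).Nonempty} := by
  have hfaces : Fintype.card (ι ⊕ ι) = 2 * Fintype.card ι := by
    rw [Fintype.card_sum, two_mul]
  rw [← hfaces]
  refine (choose_le_card_subsetsWithLargeClosure (by omega) (V := univ) hcard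
    (boxFaceWeights a b)).trans (card_le_card fun J hJ => ?_)
  obtain ⟨-, hJcard, hJclosure⟩ := mem_subsetsWithLargeClosure.1 hJ
  refine mem_filter.2 ⟨mem_univ J, hJcard, fun hJgood => ?_⟩
  have := hmax _ (nonempty_inter_biInter_coordUpperClosure (V := univ) hJgood)
  omega

open scoped Classical in
lemma sub_div_pow_le_one_sub_of_forall_card_le [Fintype α] {S : Set (ι → ℝ)}
    {a b : α → ι → ℝ} {m : ℕ} {γ : ℝ} (hι : 0 < Fintype.card ι) (hγ : γ ≤ 1)
    (hm : 2 * Fintype.card ι ≤ m) (hmα : m ≤ Fintype.card α)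
    (hmax : ∀ J : Finset α, (S ∩ ⋂ j ∈ J, Set.Icc (a j) (b j)).Nonempty → #J ≤ m)
    (hgood : γ * (Fintype.card α).choose (2 * Fintype.card ι) ≤
      #{J : Finset α | #J = 2 * Fintype.card ι ∧
        (S ∩ ⋂ j ∈ J, Set.Icc (a j) (b j)).Nonempty}) :
    (((Fintype.card α : ℝ) - m) / Fintype.card α) ^ (2 * Fintype.card ι) ≤ 1 - γ := by
  rcases hmα.lt_or_eq with hlt | heq
  · obtain ⟨t, ht⟩ : ∃ t, Fintype.card α = t + (m + 1) :=
      ⟨Fintype.card α - (m + 1), by omega⟩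
    have hC : #{J : Finset α | #J = 2 * Fintype.card ι} =
        (Fintype.card α).choose (2 * Fintype.card ι) := by simp
    rw [← hC] at hgood
    have hbad := card_filter_and_not_le hgood
    rw [hC] at hbad
    exact sub_div_pow_le_of_choose_le ht
      ((Nat.cast_le.2 (choose_le_card_filter_not_nonempty hm hmax ht)).trans hbad)
  · simp [heq, hι.ne', hγ]

end Boxes

theorem fractional_S_helly_for_2d_tuples (d : ℕ) (hd : 0 < d) (α : ℝ)
    (hα : α ∈ Set.Ioc (0 : ℝ) 1) (S : Set (Fin d → ℝ)) (n : ℕ) (hn : 2 * d ≤ n)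
    (B : Fin n → Set (Fin d → ℝ)) (hB : ∀ j, IsBox (B j))
    (hcount : α * (n.choose (2 * d) : ℕ) ≤
      ({J : Finset (Fin n) | J.card = 2 * d ∧ (S ∩ ⋂ j ∈ J, B j).Nonempty}.ncard : ℕ)) :
    ∃ J : Finset (Fin n),
      (1 - (1 - α) ^ ((1 : ℝ) / (2 * d))) * n ≤ (J.card : ℝ) ∧
      (S ∩ ⋂ j ∈ J, B j).Nonempty := by
  classical
  choose a b _ hBeq using hB
  obtain rfl : B = fun j => Set.Icc (a j) (b j) := funext hBeq
  have hgood : α * n.choose (2 * d) ≤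
      #{J : Finset (Fin n) | #J = 2 * d ∧ (S ∩ ⋂ j ∈ J, Set.Icc (a j) (b j)).Nonempty} := by
    rw [← Set.ncard_coe_finset, coe_filter]
    simpa using hcount
  obtain ⟨J₀, hJ₀⟩ := card_pos.1 <| Nat.cast_pos.1 <|
    (mul_pos hα.1 (by exact_mod_cast Nat.choose_pos hn)).trans_le hgood
  obtain ⟨hJ₀card, hJ₀⟩ := (mem_filter.1 hJ₀).2
  obtain ⟨J, hJ, hmax⟩ := exists_max_image
    {J : Finset (Fin n) | (S ∩ ⋂ j ∈ J, Set.Icc (a j) (b j)).Nonempty} card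
    ⟨J₀, mem_filter.2 ⟨mem_univ _, hJ₀⟩⟩
  replace hmax : ∀ J', (S ∩ ⋂ j ∈ J', Set.Icc (a j) (b j)).Nonempty → #J' ≤ #J :=
    fun J' hJ' => hmax J' (mem_filter.2 ⟨mem_univ _, hJ'⟩)
  refine ⟨J, ?_, (mem_filter.1 hJ).2⟩
  have key := sub_div_pow_le_one_sub_of_forall_card_le (ι := Fin d) (by simpa using hd)
    hα.2 (by simpa [hJ₀card] using hmax J₀ hJ₀) (card_le_univ J) hmax (by simpa using hgood)
  simp only [Fintype.card_fin] at key
  simpa using one_sub_rpow_mul_le (by omega : 0 < 2 * d)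
    ((card_le_univ J).trans_eq (Fintype.card_fin n)) key
end

section
/- There exists a function N : ℕ → ℕ such that for every positive integer d, every set S ⊆ ℝ^d, and every indexed family B_1, …, B_{N(d)} of axis-parallel boxes in ℝ^d, if S ∩ B_j ∩ B_k ≠ ∅ for all j, k ∈ {1,…,N(d)}, then there exists J ⊆ {1,…,N(d)} with |J| = d+1 and S ∩ ⋂_{j∈J} B_j ≠ ∅. -/
open Finset

section ES

variable {n : ℕ}

/-- chains ending at `j` that are `r`-monotone (on indices up to `j`) -/
def chProp (f : Fin n → ℝ) (r : ℝ → ℝ → Prop) (j : Fin n) (t : Finset (Fin n)) : Prop :=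
  j ∈ t ∧ ∀ x ∈ t, x ≤ j ∧ ∀ y ∈ t, x ≤ y → r (f x) (f y)

open scoped Classical in
noncomputable def chLen (f : Fin n → ℝ) (r : ℝ → ℝ → Prop) (j : Fin n) : ℕ :=
  (univ.powerset.filter (chProp f r j)).sup card

lemma chLen_exists (f : Fin n → ℝ) (r : ℝ → ℝ → Prop) (hr : ∀ x, r x x) (j : Fin n) :
    ∃ t : Finset (Fin n), chProp f r j t ∧ t.card = chLen f r j := by
  classical
  have hne : ({j} : Finset (Fin n)) ∈ univ.powerset.filter (chProp f r j) := by
    simp [chProp, hr]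
  obtain ⟨t, ht, h2⟩ := Finset.exists_mem_eq_sup _ ⟨_, hne⟩ card
  simp only [mem_filter] at ht
  exact ⟨t, ht.2, h2.symm⟩

lemma chLen_pos (f : Fin n → ℝ) (r : ℝ → ℝ → Prop) (hr : ∀ x, r x x) (j : Fin n) :
    1 ≤ chLen f r j := by
  classical
  have hne : ({j} : Finset (Fin n)) ∈ univ.powerset.filter (chProp f r j) := by
    simp [chProp, hr]
  have := Finset.le_sup (f := card) hne
  simpa [chLen] using this

lemma chLen_lt (f : Fin n → ℝ) (r : ℝ → ℝ → Prop)
    (htr : ∀ x y z, r x y → r y z → r x z) {i j : Fin n}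
    (hij : i < j) (hf : r (f i) (f j)) (hrr : ∀ x, r x x) :
    chLen f r i < chLen f r j := by
  classical
  obtain ⟨t, ⟨hit, hch⟩, hcard⟩ := chLen_exists f r hrr i
  have hjt : j ∉ t := fun hj => absurd ((hch j hj).1) (not_le.2 hij)
  have hmem : insert j t ∈ univ.powerset.filter (chProp f r j) := by
    refine mem_filter.2 ⟨mem_powerset.2 (subset_univ _), mem_insert_self _ _, ?_⟩
    intro x hx
    rcases mem_insert.1 hx with hx1 | hx2
    · subst hx1
      refine ⟨le_refl _, ?_⟩
      intro y hy hxy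
      rcases mem_insert.1 hy with hy1 | hy2
      · subst hy1; exact hrr _
      · exact absurd hxy (not_le.2 (lt_of_le_of_lt (hch y hy2).1 hij))
    · refine ⟨((hch x hx2).1.trans hij.le), ?_⟩
      intro y hy hxy
      rcases mem_insert.1 hy with hy1 | hy2
      · subst hy1; exact htr _ _ _ ((hch x hx2).2 i hit (hch x hx2).1) hf
      · exact (hch x hx2).2 y hy2 hxy
  have hle := Finset.le_sup (f := card) hmem
  have : t.card + 1 ≤ chLen f r j := by
    simpa [chLen, Finset.card_insert_of_notMem hjt] using hle
  omega

/-- Erdős–Szekeres -/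
lemma erdos_szekeres {m : ℕ} (f : Fin n → ℝ) (hn : m * m < n) :
    ∃ s : Fin (m + 1) → Fin n, StrictMono s ∧
      (Monotone (f ∘ s) ∨ Antitone (f ∘ s)) := by
  classical
  set rI : ℝ → ℝ → Prop := fun x y => x ≤ y with hrI
  set rD : ℝ → ℝ → Prop := fun x y => y ≤ x with hrD
  have hrrI : ∀ x, rI x x := fun x => le_refl x
  have hrrD : ∀ x, rD x x := fun x => le_refl x
  have htrI : ∀ x y z, rI x y → rI y z → rI x z := fun _ _ _ h1 h2 => h1.trans h2
  have htrD : ∀ x y z, rD x y → rD y z → rD x z := fun _ _ _ h1 h2 => h2.trans h1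
  by_cases hbig : ∃ j, m + 1 ≤ chLen f rI j ∨ m + 1 ≤ chLen f rD j
  · obtain ⟨j, hj⟩ := hbig
    have key : ∀ r : ℝ → ℝ → Prop, (∀ x, r x x) → m + 1 ≤ chLen f r j →
        ∃ s : Fin (m + 1) → Fin n, StrictMono s ∧
          ∀ i i' : Fin (m+1), i ≤ i' → r (f (s i)) (f (s i')) := by
      intro r hrr hle
      obtain ⟨t, ⟨_, hch⟩, hcard⟩ := chLen_exists f r hrr j
      obtain ⟨u, hut, hucard⟩ := Finset.exists_subset_card_eq (hcard ▸ hle)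
      set s : Fin (m+1) → Fin n := fun i => (u.orderIsoOfFin hucard i : Fin n) with hs
      refine ⟨s, fun i i' hii => (u.orderIsoOfFin hucard).strictMono hii, ?_⟩
      intro i i' hii
      exact (hch _ (hut (u.orderIsoOfFin hucard i).2)).2 _ (hut (u.orderIsoOfFin hucard i').2)
        (((u.orderIsoOfFin hucard).monotone hii : _))
    rcases hj with hj | hj
    · obtain ⟨s, hsm, hsr⟩ := key rI hrrI hj
      exact ⟨s, hsm, Or.inl fun i i' h => hsr i i' h⟩
    · obtain ⟨s, hsm, hsr⟩ := key rD hrrD hj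
      exact ⟨s, hsm, Or.inr fun i i' h => hsr i i' h⟩
  · exfalso
    push_neg at hbig
    have hinj : Set.InjOn (fun j => (chLen f rI j, chLen f rD j)) Set.univ := by
      intro i _ j _ hij
      by_contra hne
      rcases lt_trichotomy i j with h | h | h
      · rcases le_or_gt (f i) (f j) with hf | hf
        · have := chLen_lt f rI htrI h hf hrrI
          simp only [Prod.mk.injEq] at hij; omega
        · have := chLen_lt f rD htrD h hf.le hrrD
          simp only [Prod.mk.injEq] at hij; omega
      · exact hne h
      · rcases le_or_gt (f j) (f i) with hf | hf
        · have := chLen_lt f rI htrI h hf hrrI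
          simp only [Prod.mk.injEq] at hij; omega
        · have := chLen_lt f rD htrD h hf.le hrrD
          simp only [Prod.mk.injEq] at hij; omega
    have hmaps : ∀ j : Fin n, (chLen f rI j, chLen f rD j) ∈
        (Finset.Icc 1 m) ×ˢ (Finset.Icc 1 m) := by
      intro j
      have h1 := chLen_pos f rI hrrI j
      have h2 := chLen_pos f rD hrrD j
      have h3 := (hbig j).1
      have h4 := (hbig j).2
      simp only [Finset.mem_product, Finset.mem_Icc]
      omega
    have hcard : (univ : Finset (Fin n)).card ≤
        ((Finset.Icc 1 m) ×ˢ (Finset.Icc 1 m)).card := by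
      refine Finset.card_le_card_of_injOn (fun j => (chLen f rI j, chLen f rD j))
        (fun j _ => hmaps j) ?_
      intro i _ j _ h
      exact hinj (Set.mem_univ i) (Set.mem_univ j) h
    rw [Finset.card_univ, Fintype.card_fin, Finset.card_product, Nat.card_Icc] at hcard
    simp only [Nat.add_sub_cancel] at hcard
    omega

def esB : ℕ → ℕ → ℕ
  | 0, m => m
  | k+1, m => (esB k m + 1) * (esB k m + 1)

lemma iter_es : ∀ (k : ℕ) {n m : ℕ} (fs : Fin k → Fin n → ℝ), esB k m < n →
    ∃ s : Fin (m + 1) → Fin n, StrictMono s ∧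
      ∀ i, Monotone (fs i ∘ s) ∨ Antitone (fs i ∘ s) := by
  intro k
  induction k with
  | zero =>
    intro n m fs hn
    have hn' : m < n := by have : esB 0 m = m := rfl; omega
    refine ⟨fun i => ⟨i.1, lt_of_lt_of_le i.2 hn'⟩, ?_, fun i => i.elim0⟩
    intro i j hij
    exact Fin.mk_lt_mk.mpr hij
  | succ k ih =>
    intro n m fs hn
    have h1 : (esB k m + 1) * (esB k m + 1) < n := by
      have : esB (k+1) m = (esB k m + 1) * (esB k m + 1) := rfl
      omega
    obtain ⟨s1, hs1, hmono1⟩ := erdos_szekeres (fs 0) h1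
    have h2 : esB k m < esB k m + 1 + 1 := by omega
    obtain ⟨s2, hs2, hmono2⟩ := ih (fun i => fs i.succ ∘ s1) h2
    refine ⟨s1 ∘ s2, hs1.comp hs2, ?_⟩
    intro i
    refine Fin.cases ?_ ?_ i
    · rcases hmono1 with h | h
      · exact Or.inl (h.comp hs2.monotone)
      · exact Or.inr (h.comp_monotone hs2.monotone)
    · intro i'
      exact hmono2 i'

theorem pairwise_S_intersecting_boxes_contain_S_intersecting_d_plus_one_tuple :
    ∃ N : ℕ → ℕ, ∀ d : ℕ, 0 < d → ∀ (S : Set (Fin d → ℝ))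
      (B : Fin (N d) → Set (Fin d → ℝ)), (∀ j, IsBox (B j)) →
      (∀ j k, (S ∩ (B j ∩ B k)).Nonempty) →
      ∃ J : Finset (Fin (N d)), J.card = d + 1 ∧ (S ∩ ⋂ j ∈ J, B j).Nonempty := by
  classical
  refine ⟨fun d => esB d (esB d d) + 1, ?_⟩
  intro d hd S B hB hint
  choose a b hab hBeq using hB
  -- stage 1: make all a-coordinates monotone
  obtain ⟨s1, hs1, hmono1⟩ := iter_es d (n := esB d (esB d d) + 1) (m := esB d d)
    (fun c j => a j c) (by omega)
  -- stage 2: make all b-coordinates monotone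
  obtain ⟨s2, hs2, hmono2⟩ := iter_es d (n := esB d d + 1) (m := d)
    (fun c j => b (s1 j) c) (by omega)
  set s : Fin (d + 1) → Fin (esB d (esB d d) + 1) := s1 ∘ s2 with hs
  have hsmono : StrictMono s := hs1.comp hs2
  obtain ⟨p, hpS, hp0, hp1⟩ := hint (s 0) (s (Fin.last d))
  have hp0' : a (s 0) ≤ p ∧ p ≤ b (s 0) := by
    rw [hBeq] at hp0; exact hp0
  have hp1' : a (s (Fin.last d)) ≤ p ∧ p ≤ b (s (Fin.last d)) := by
    rw [hBeq] at hp1; exact hp1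
  refine ⟨Finset.image s Finset.univ, ?_, p, hpS, ?_⟩
  · rw [Finset.card_image_of_injective _ hsmono.injective, Finset.card_univ, Fintype.card_fin]
  · rw [Set.mem_iInter₂]
    intro j hj
    obtain ⟨t, -, rfl⟩ := Finset.mem_image.1 hj
    rw [hBeq]
    constructor
    · intro c
      rcases hmono1 c with h | h
      · calc a (s t) c ≤ a (s (Fin.last d)) c := by
              have := (h.comp hs2.monotone) (Fin.le_last t)
              simpa [s, Function.comp] using this
          _ ≤ p c := hp1'.1 c
      · calc a (s t) c ≤ a (s 0) c := by
              have := (h.comp_monotone hs2.monotone) (Fin.zero_le t)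
              simpa [s, Function.comp] using this
          _ ≤ p c := hp0'.1 c
    · intro c
      rcases hmono2 c with h | h
      · calc p c ≤ b (s 0) c := hp0'.2 c
          _ ≤ b (s t) c := by simpa [s, Function.comp] using h (Fin.zero_le t)
      · calc p c ≤ b (s (Fin.last d)) c := hp1'.2 c
          _ ≤ b (s t) c := by simpa [s, Function.comp] using h (Fin.le_last t)
end ES
end

section
/- For every positive integer d there exists a positive integer n₀ such that for every n ≥ n₀ and every indexed family B_1, …, B_n of axis-parallel boxes in ℝ^d with B_j ∩ B_k ≠ ∅ for all j, k ∈ {1,…,n}, there exist pairwise distinct indices i_1, …, i_{d+1} ∈ {1,…,n} such that B_{i_d} ∩ B_{i_{d+1}} = B_{i_1} ∩ B_{i_2} ∩ ⋯ ∩ B_{i_{d+1}}. -/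
open Finset

namespace Finset

section ErdosSzekeres

variable {ι β : Type*} [LinearOrder ι] [LinearOrder β] {f : ι → β} {s : Finset ι}
  {i j : ι}

open scoped Classical in
noncomputable def monotoneChainsEndingAt (f : ι → β) (s : Finset ι) (i : ι) :
    Finset (Finset ι) :=
  {t ∈ s.powerset | i ∈ t ∧ (∀ x ∈ t, x ≤ i) ∧ MonotoneOn f (t : Set ι)}

lemma mem_monotoneChainsEndingAt {t : Finset ι} :
    t ∈ monotoneChainsEndingAt f s i ↔
      t ⊆ s ∧ i ∈ t ∧ (∀ x ∈ t, x ≤ i) ∧ MonotoneOn f t := by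
  simp [monotoneChainsEndingAt]

noncomputable def longestMonotoneEndingAt (f : ι → β) (s : Finset ι) (i : ι) : ℕ :=
  (monotoneChainsEndingAt f s i).sup card

lemma exists_monotoneOn_card_eq_longestMonotoneEndingAt (hi : i ∈ s) :
    ∃ t ⊆ s, i ∈ t ∧ (∀ x ∈ t, x ≤ i) ∧ MonotoneOn f t ∧
      #t = longestMonotoneEndingAt f s i := by
  have hsingleton : {i} ∈ monotoneChainsEndingAt f s i :=
    mem_monotoneChainsEndingAt.2 (by simp [hi])
  obtain ⟨t, ht, hcard⟩ := exists_mem_eq_sup _ ⟨_, hsingleton⟩ card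
  obtain ⟨hts, hit, hti, hmono⟩ := mem_monotoneChainsEndingAt.1 ht
  exact ⟨t, hts, hit, hti, hmono, hcard.symm⟩

lemma one_le_longestMonotoneEndingAt (hi : i ∈ s) : 1 ≤ longestMonotoneEndingAt f s i := by
  obtain ⟨t, -, hit, -, -, hcard⟩ :=
    exists_monotoneOn_card_eq_longestMonotoneEndingAt (f := f) hi
  exact hcard ▸ card_pos.2 ⟨i, hit⟩

lemma longestMonotoneEndingAt_lt (hj : j ∈ s) (hi : i ∈ s) (hji : j < i) (hf : f j ≤ f i) :
    longestMonotoneEndingAt f s j < longestMonotoneEndingAt f s i := by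
  obtain ⟨t, hts, hjt, htj, hmono, hcard⟩ :=
    exists_monotoneOn_card_eq_longestMonotoneEndingAt (f := f) hj
  have hit : i ∉ t := fun h => (htj i h).not_gt hji
  have hmem : insert i t ∈ monotoneChainsEndingAt f s i := by
    simp only [mem_monotoneChainsEndingAt, forall_mem_insert, coe_insert, Set.monotoneOn_insert_iff]
    refine ⟨insert_subset hi hts, mem_insert_self _ _,
      ⟨le_rfl, fun x hx => (htj x hx).trans hji.le⟩,
      fun x hx _ => (hmono hx hjt (htj x hx)).trans hf,
      fun x hx hix => absurd ((htj x hx).trans_lt hji) hix.not_gt, hmono⟩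
  calc longestMonotoneEndingAt f s j = #t := hcard.symm
    _ < #(insert i t) := by rw [card_insert_of_notMem hit]; omega
    _ ≤ longestMonotoneEndingAt f s i := le_sup (f := card) hmem

/-- The Erdős–Szekeres theorem. -/
theorem exists_subset_monotoneOn_or_antitoneOn_of_mul_lt_card (f : ι → β) {m : ℕ}
    (h : m * m < #s) : ∃ t ⊆ s, m < #t ∧ (MonotoneOn f t ∨ AntitoneOn f t) := by
  by_cases hshort : ∀ i ∈ s, longestMonotoneEndingAt f s i ≤ m
  · have hmaps : ∀ i ∈ s, longestMonotoneEndingAt f s i ∈ Icc 1 m :=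
      fun i hi => mem_Icc.2 ⟨one_le_longestMonotoneEndingAt hi, hshort i hi⟩
    -- A pigeonhole class of chain lengths carries no two indices with `f` nondecreasing.
    obtain ⟨v, -, hv⟩ := exists_lt_card_fiber_of_mul_lt_card_of_maps_to hmaps (by simpa using h)
    refine ⟨_, filter_subset _ _, hv, .inr fun x hx y hy hxy => ?_⟩
    simp only [mem_coe, mem_filter] at hx hy
    by_contra! hlt
    obtain hxy | rfl := hxy.lt_or_eq
    · exact (longestMonotoneEndingAt_lt hx.1 hy.1 hxy hlt.le).ne (hx.2.trans hy.2.symm)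
    · exact hlt.false
  · obtain ⟨i, hi, hm⟩ : ∃ i ∈ s, m < longestMonotoneEndingAt f s i := by
      simpa using hshort
    obtain ⟨t, hts, -, -, hmono, hcard⟩ :=
      exists_monotoneOn_card_eq_longestMonotoneEndingAt (f := f) hi
    exact ⟨t, hts, hcard ▸ hm, .inl hmono⟩

theorem exists_subset_forall_monotoneOn_or_antitoneOn {κ : Type*} (F : κ → ι → β)
    (J : Finset κ) {m : ℕ} (h : m ^ 2 ^ #J < #s) :
    ∃ t ⊆ s, m < #t ∧ ∀ k ∈ J, MonotoneOn (F k) t ∨ AntitoneOn (F k) t := by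
  classical
  induction J using Finset.induction_on generalizing s with
  | empty => exact ⟨s, subset_rfl, by simpa using h, by simp⟩
  | insert k J hk ih =>
    rw [card_insert_of_notMem hk, pow_succ, pow_mul, sq] at h
    obtain ⟨t₁, ht₁s, hm₁, hk₁⟩ :=
      exists_subset_monotoneOn_or_antitoneOn_of_mul_lt_card (F k) h
    obtain ⟨t, htt₁, hm, hJ⟩ := ih hm₁
    refine ⟨t, htt₁.trans ht₁s, hm, forall_mem_insert _ _ _ |>.2 ⟨?_, hJ⟩⟩
    exact hk₁.imp (·.mono (coe_subset.2 htt₁)) (·.mono (coe_subset.2 htt₁))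

end ErdosSzekeres

end Finset

section Boxes

variable {ι κ β : Type*} [Preorder ι] [LinearOrder β] {f : ι → β} {t : Set ι} {x y z : ι}

lemma le_max_of_monotoneOn_or_antitoneOn (hf : MonotoneOn f t ∨ AntitoneOn f t) (hx : x ∈ t)
    (hy : y ∈ t) (hz : z ∈ t) (hxy : x ≤ y) (hyz : y ≤ z) : f y ≤ max (f x) (f z) := by
  rcases hf with hf | hf
  · exact (hf hy hz hyz).trans (le_max_right _ _)
  · exact (hf hx hy hxy).trans (le_max_left _ _)

lemma min_le_of_monotoneOn_or_antitoneOn (hf : MonotoneOn f t ∨ AntitoneOn f t) (hx : x ∈ t)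
    (hy : y ∈ t) (hz : z ∈ t) (hxy : x ≤ y) (hyz : y ≤ z) : min (f x) (f z) ≤ f y := by
  rcases hf with hf | hf
  · exact (min_le_left _ _).trans (hf hx hy hxy)
  · exact (min_le_right _ _).trans (hf hy hz hyz)

theorem Icc_inter_Icc_subset_Icc_of_monotoneOn_or_antitoneOn {a b : ι → κ → β}
    (ha : ∀ k, MonotoneOn (a · k) t ∨ AntitoneOn (a · k) t)
    (hb : ∀ k, MonotoneOn (b · k) t ∨ AntitoneOn (b · k) t)
    (hx : x ∈ t) (hy : y ∈ t) (hz : z ∈ t) (hxy : x ≤ y) (hyz : y ≤ z) :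
    Set.Icc (a x) (b x) ∩ Set.Icc (a z) (b z) ⊆ Set.Icc (a y) (b y) := by
  rw [Set.Icc_inter_Icc]
  exact Set.Icc_subset_Icc
    (fun k => le_max_of_monotoneOn_or_antitoneOn (ha k) hx hy hz hxy hyz)
    (fun k => min_le_of_monotoneOn_or_antitoneOn (hb k) hx hy hz hxy hyz)

end Boxes

lemma exists_perm_apply_pred_eq_zero_and_apply_last_eq_last (d : ℕ) :
    ∃ σ : Equiv.Perm (Fin (d + 1)),
      σ ⟨d - 1, (d.sub_le 1).trans_lt d.lt_succ_self⟩ = 0 ∧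
        σ (Fin.last d) = Fin.last d := by
  rcases d with _ | d
  · exact ⟨1, Fin.ext (by simp), rfl⟩
  · refine ⟨Equiv.swap 0 ⟨d, by omega⟩, Equiv.swap_apply_right _ _, ?_⟩
    exact Equiv.swap_apply_of_ne_of_ne (Fin.ne_of_val_ne (by simp)) (Fin.ne_of_val_ne (by simp))

theorem pairwise_intersecting_boxes_last_pair_intersection (d : ℕ) :
    ∃ n₀ : ℕ, 0 < n₀ ∧ ∀ n : ℕ, n₀ ≤ n → ∀ B : Fin n → Set (Fin d → ℝ),
      (∀ j, IsBox (B j)) → (∀ j k, (B j ∩ B k).Nonempty) →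
      ∃ i : Fin (d + 1) → Fin n, Function.Injective i ∧
        B (i ⟨d - 1, by omega⟩) ∩ B (i ⟨d, by omega⟩) = ⋂ t, B (i t) := by
  refine ⟨d ^ 2 ^ (d + d) + 1, Nat.succ_pos _, fun n hn B hbox _ => ?_⟩
  choose a b _ hB using hbox
  obtain ⟨t, -, hdt, hmono⟩ := exists_subset_forall_monotoneOn_or_antitoneOn
    (Sum.elim (fun k j => a j k) (fun k j => b j k)) univ (s := univ) (m := d)
    (by simp; omega)
  let g : Fin (d + 1) ↪o Fin n := (Fin.castLEOrderEmb hdt).trans (t.orderEmbOfFin rfl)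
  have hg : ∀ y, g y ∈ t := fun y => t.orderEmbOfFin_mem rfl _
  have hbetween : ∀ y, B (g 0) ∩ B (g (Fin.last d)) ⊆ B (g y) := fun y => by
    simp only [hB]
    exact Icc_inter_Icc_subset_Icc_of_monotoneOn_or_antitoneOn
      (fun k => hmono (.inl k) (mem_univ _)) (fun k => hmono (.inr k) (mem_univ _))
      (hg 0) (hg y) (hg _) (g.monotone (Fin.zero_le y)) (g.monotone (Fin.le_last y))
  obtain ⟨σ, hσpred, hσlast⟩ := exists_perm_apply_pred_eq_zero_and_apply_last_eq_last d
  refine ⟨g ∘ σ, g.injective.comp σ.injective, ?_⟩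
  change B (g (σ ⟨d - 1, _⟩)) ∩ B (g (σ (Fin.last d))) = ⋂ y, B (g (σ y))
  rw [σ.surjective.iInter_comp (fun y => B (g y)), hσpred, hσlast]
  exact (Set.subset_iInter hbetween).antisymm
    (Set.subset_inter (Set.iInter_subset _ 0) (Set.iInter_subset _ (Fin.last d)))
end

section
/- Let B_1, …, B_n be axis-parallel boxes in ℝ^d with B_j = ∏_{i=1}^d [a_j^{(i)}, b_j^{(i)}]. Suppose that for each i ∈ {1,…,d}, ℓ_i and r_i are permutations of {1,…,n} such that ℓ_i(j) < ℓ_i(k) implies a_j^{(i)} ≤ a_k^{(i)}, and r_i(j) < r_i(k) implies b_j^{(i)} ≥ b_k^{(i)}. Then for every nonempty P ⊆ {1,…,n}, setting P' = ⋂_{i=1}^d ( {s ∈ {1,…,n} : ℓ_i(s) ≤ max_{j∈P} ℓ_i(j)} ∩ {s ∈ {1,…,n} : r_i(s) ≤ max_{j∈P} r_i(j)} ), one has ⋂_{j∈P} B_j = ⋂_{j∈P'} B_j. -/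
theorem intersection_determined_by_dependent_set (d n : ℕ)
    (a b : Fin d → Fin n → ℝ) (hab : ∀ i j, a i j ≤ b i j)
    (B : Fin n → Set (Fin d → ℝ))
    (hB : ∀ j, B j = Set.Icc (fun i => a i j) (fun i => b i j))
    (l r : Fin d → Equiv.Perm (Fin n))
    (hl : ∀ i j k, l i j < l i k → a i j ≤ a i k)
    (hr : ∀ i j k, r i j < r i k → b i k ≤ b i j)
    (P : Finset (Fin n)) (hP : P.Nonempty) :
    ⋂ j ∈ P, B j =
      ⋂ j ∈ (Finset.univ.filter fun s : Fin n =>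
        ∀ i : Fin d, (∃ j ∈ P, l i s ≤ l i j) ∧ (∃ j ∈ P, r i s ≤ r i j)), B j := by
  have hl' : ∀ i j k, l i j ≤ l i k → a i j ≤ a i k := by
    intro i j k h
    rcases lt_or_eq_of_le h with h | h
    · exact hl i j k h
    · rw [(l i).injective h]
  have hr' : ∀ i j k, r i j ≤ r i k → b i k ≤ b i j := by
    intro i j k h
    rcases lt_or_eq_of_le h with h | h
    · exact hr i j k h
    · rw [(r i).injective h]
  apply Set.Subset.antisymm
  · intro x hx
    simp only [Set.mem_iInter, Finset.mem_filter, Finset.mem_univ, true_and] at hx ⊢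
    intro s hs
    rw [hB s]
    constructor <;> intro i
    · obtain ⟨j, hjP, hj⟩ := (hs i).1
      have := hx j hjP
      rw [hB j] at this
      exact le_trans (hl' i s j hj) (this.1 i)
    · obtain ⟨j, hjP, hj⟩ := (hs i).2
      have := hx j hjP
      rw [hB j] at this
      exact le_trans (this.2 i) (hr' i s j hj)
  · intro x hx
    simp only [Set.mem_iInter, Finset.mem_filter, Finset.mem_univ, true_and] at hx ⊢
    intro j hj
    exact hx j (fun i => ⟨⟨j, hj, le_refl _⟩, ⟨j, hj, le_refl _⟩⟩)
end

section
/- Let S ⊆ ℝ^d, let B_1, …, B_n be axis-parallel boxes in ℝ^d with B_j = ∏_{i=1}^d [a_j^{(i)}, b_j^{(i)}], and suppose that for each i ∈ {1,…,d}, ℓ_i and r_i are permutations of {1,…,n} such that ℓ_i(j) < ℓ_i(k) implies a_j^{(i)} ≤ a_k^{(i)}, and r_i(j) < r_i(k) implies b_j^{(i)} ≥ b_k^{(i)}. Let A = {ℓ_1, r_1, …, ℓ_d, r_d} and let p be an integer with 2 ≤ p ≤ n. If S ∩ ⋂_{j∈P} B_j ≠ ∅ for every P ⊆ {1,…,n}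 with |P| = p, then there exists Q ⊆ {1,…,n} with |Q| = d_p(A) + p and S ∩ ⋂_{j∈Q} B_j ≠ ∅. -/
/-- `σ(≤P) = {s : σ s ≤ max_{j ∈ P} σ j}`. -/
def permLe {n : ℕ} (σ : Equiv.Perm (Fin n)) (P : Finset (Fin n)) : Finset (Fin n) :=
  Finset.univ.filter fun s => ∃ j ∈ P, σ s ≤ σ j

/-- The `P`-dependent set `⟨A;P⟩ = ⋂_{σ ∈ A} σ(≤P)`. -/
def depSet {n : ℕ} (A : Finset (Equiv.Perm (Fin n))) (P : Finset (Fin n)) : Finset (Fin n) :=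
  Finset.univ.filter fun s => ∀ σ ∈ A, ∃ j ∈ P, σ s ≤ σ j

/-- The `P`-dependency `d(A;P) = |⟨A;P⟩| - |P|`. -/
def dep {n : ℕ} (A : Finset (Equiv.Perm (Fin n))) (P : Finset (Fin n)) : ℕ :=
  (depSet A P).card - P.card

/-- The `p`-tuple dependency `d_p(A) = max {d(A;P) : |P| = p}`. -/
def tupleDep {n : ℕ} (A : Finset (Equiv.Perm (Fin n))) (p : ℕ) : ℕ :=
  (Finset.powersetCard p (Finset.univ : Finset (Fin n))).sup (dep A)

theorem p_tuplewise_S_intersecting_boxes (d n : ℕ) (S : Set (Fin d → ℝ))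
    (a b : Fin d → Fin n → ℝ) (hab : ∀ i j, a i j ≤ b i j)
    (B : Fin n → Set (Fin d → ℝ))
    (hB : ∀ j, B j = Set.Icc (fun i => a i j) (fun i => b i j))
    (l r : Fin d → Equiv.Perm (Fin n))
    (hl : ∀ i j k, l i j < l i k → a i j ≤ a i k)
    (hr : ∀ i j k, r i j < r i k → b i k ≤ b i j)
    (A : Finset (Equiv.Perm (Fin n)))
    (hA : A = Finset.image l Finset.univ ∪ Finset.image r Finset.univ)
    (p : ℕ) (hp2 : 2 ≤ p) (hpn : p ≤ n)
    (hS : ∀ P : Finset (Fin n), P.card = p → (S ∩ ⋂ j ∈ P, B j).Nonempty) :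
    ∃ Q : Finset (Fin n), Q.card = tupleDep A p + p ∧ (S ∩ ⋂ j ∈ Q, B j).Nonempty := by
  have hne : (Finset.powersetCard p (Finset.univ : Finset (Fin n))).Nonempty := by
    rw [Finset.powersetCard_nonempty]
    simpa using hpn
  obtain ⟨P, hPmem, hPsup⟩ := Finset.exists_mem_eq_sup _ hne (dep A)
  have hPcard : P.card = p := (Finset.mem_powersetCard.mp hPmem).2
  have hsub : P ⊆ depSet A P := by
    intro s hs
    simp only [depSet, Finset.mem_filter, Finset.mem_univ, true_and]
    exact fun σ _ => ⟨s, hs, le_refl _⟩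
  refine ⟨depSet A P, ?_, ?_⟩
  · have := Finset.card_le_card hsub
    rw [tupleDep, hPsup]
    simp only [dep, hPcard]
    omega
  · obtain ⟨x, hxS, hx⟩ := hS P hPcard
    refine ⟨x, hxS, ?_⟩
    simp only [Set.mem_iInter] at hx ⊢
    intro s hs
    simp only [depSet, Finset.mem_filter, Finset.mem_univ, true_and] at hs
    rw [hB]
    constructor
    · intro i
      obtain ⟨j, hjP, hle⟩ := hs (l i) (by
        rw [hA]; exact Finset.mem_union_left _ (Finset.mem_image_of_mem _ (Finset.mem_univ i)))
      have haij : a i s ≤ a i j := by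
        rcases lt_or_eq_of_le hle with h | h
        · exact hl i s j h
        · rw [(l i).injective h]
      have := hx j hjP
      rw [hB j] at this
      exact haij.trans (this.1 i)
    · intro i
      obtain ⟨j, hjP, hle⟩ := hs (r i) (by
        rw [hA]; exact Finset.mem_union_right _ (Finset.mem_image_of_mem _ (Finset.mem_univ i)))
      have hbij : b i j ≤ b i s := by
        rcases lt_or_eq_of_le hle with h | h
        · exact hr i s j h
        · rw [(r i).injective h]
      have := hx j hjP
      rw [hB j] at this
      exact (this.2 i).trans hbij
end

section
/- For all positive integers a and b there exists a positive integer n with n ≥ 2 such that every set A of permutations of {1,…,n} with |A| ≤ a satisfies d_2(A) ≥ b − 1. -/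
section Quasiconvex

variable {α β ι : Type*} [LinearOrder α] [LinearOrder β]

theorem Finset.card_filter_lt_add_card_filter_gt {S : Finset α} {m : α} (hm : m ∈ S) :
    (S.filter (· < m)).card + (S.filter (m < ·)).card + 1 = S.card := by
  have hge : S.filter (m ≤ ·) = insert m (S.filter (m < ·)) := by
    ext y; simp only [Finset.mem_filter, Finset.mem_insert, le_iff_lt_or_eq]; grind
  have := S.card_filter_add_card_filter_not (· < m)
  simp only [not_lt, hge] at this
  rw [Finset.card_insert_of_notMem (by simp)] at this
  omega

-- The order-theoretic counterpart of `QuasiconvexOn`, which needs a module as domain.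
def IsQuasiconvexOn (f : α → β) (s : Set α) : Prop :=
  ∀ ⦃x⦄, x ∈ s → ∀ ⦃y⦄, y ∈ s → ∀ ⦃z⦄, z ∈ s → x ≤ y → y ≤ z → f y ≤ max (f x) (f z)

theorem IsQuasiconvexOn.mono {f : α → β} {s t : Set α} (h : IsQuasiconvexOn f t) (hst : s ⊆ t) :
    IsQuasiconvexOn f s :=
  fun _ hx _ hy _ hz => h (hst hx) (hst hy) (hst hz)

theorem IsQuasiconvexOn.insert {f : α → β} {s : Set α} {m : α} (hs : IsQuasiconvexOn f s)
    (hmax : ∀ y ∈ s, f y ≤ f m) (hside : (∀ y ∈ s, y < m) ∨ ∀ y ∈ s, m < y) :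
    IsQuasiconvexOn f (insert m s) := by
  rintro x (rfl | hx) y (rfl | hy) z (rfl | hz) hxy hyz
  all_goals grind [IsQuasiconvexOn]

theorem IsQuasiconvexOn.le_max_min'_max' {f : α → β} {T : Finset α}
    (h : IsQuasiconvexOn f T) (hT : T.Nonempty) {s : α} (hs : s ∈ T) :
    f s ≤ max (f (T.min' hT)) (f (T.max' hT)) :=
  h (T.min'_mem hT) hs (T.max'_mem hT) (T.min'_le s hs) (T.le_max' s hs)

theorem Finset.exists_subset_isQuasiconvexOn (f : α → β) (k : ℕ) :
    ∀ S : Finset α, 2 ^ k ≤ S.card → ∃ T ⊆ S, k ≤ T.card ∧ IsQuasiconvexOn f T := by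
  induction k with
  | zero => exact fun S _ => ⟨∅, S.empty_subset, le_rfl, by simp [IsQuasiconvexOn]⟩
  | succ k ih =>
    intro S hS
    have hSne : S.Nonempty := Finset.card_pos.mp ((Nat.two_pow_pos _).trans_le hS)
    obtain ⟨m, hmS, hmax⟩ := S.exists_max_image f hSne
    have hsplit := Finset.card_filter_lt_add_card_filter_gt hmS
    have hside : ∃ S' ⊆ S, 2 ^ k ≤ S'.card ∧ ((∀ y ∈ S', y < m) ∨ ∀ y ∈ S', m < y) := by
      rcases le_or_gt (2 ^ k) (S.filter (· < m)).card with h | h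
      · exact ⟨S.filter (· < m), Finset.filter_subset _ _, h,
          .inl fun y hy => (Finset.mem_filter.mp hy).2⟩
      · refine ⟨S.filter (m < ·), Finset.filter_subset _ _, by rw [pow_succ] at hS; omega,
          .inr fun y hy => (Finset.mem_filter.mp hy).2⟩
    obtain ⟨S', hS'S, hS', hS'side⟩ := hside
    obtain ⟨T, hTS', hT, hqc⟩ := ih S' hS'
    have hmT : m ∉ T := fun hm => by
      rcases hS'side with h | h <;> exact lt_irrefl m (h m (hTS' hm))
    refine ⟨insert m T, Finset.insert_subset hmS (hTS'.trans hS'S), ?_, ?_⟩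
    · rw [Finset.card_insert_of_notMem hmT]; omega
    · rw [Finset.coe_insert]
      exact hqc.insert (fun y hy => hmax y (hS'S (hTS' hy)))
        (hS'side.imp (fun h y hy => h y (hTS' hy)) (fun h y hy => h y (hTS' hy)))

theorem Finset.exists_subset_forall_isQuasiconvexOn (f : ι → α → β) (k : ℕ) (F : Finset ι) :
    ∀ S : Finset α, (2 ^ ·)^[F.card] k ≤ S.card →
      ∃ T ⊆ S, k ≤ T.card ∧ ∀ i ∈ F, IsQuasiconvexOn (f i) T := by
  classical
  induction F using Finset.induction_on with
  | empty => exact fun S hS => ⟨S, subset_rfl, hS, by simp⟩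
  | insert i F hi ih =>
    intro S hS
    rw [Finset.card_insert_of_notMem hi, Function.iterate_succ_apply'] at hS
    obtain ⟨T₁, hT₁S, hT₁, hqc₁⟩ := Finset.exists_subset_isQuasiconvexOn (f i) _ S hS
    obtain ⟨T, hTT₁, hT, hqc⟩ := ih T₁ hT₁
    refine ⟨T, hTT₁.trans hT₁S, hT, Finset.forall_mem_insert _ _ _ |>.mpr ⟨?_, hqc⟩⟩
    exact hqc₁.mono (Finset.coe_subset.mpr hTT₁)

end Quasiconvex

theorem dep_le_tupleDep {n p : ℕ} (A : Finset (Equiv.Perm (Fin n))) {P : Finset (Fin n)}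
    (hP : P.card = p) : dep A P ≤ tupleDep A p :=
  Finset.le_sup (Finset.mem_powersetCard.mpr ⟨Finset.subset_univ _, hP⟩)

theorem card_sub_two_le_tupleDep {n : ℕ} (A : Finset (Equiv.Perm (Fin n))) {T : Finset (Fin n)}
    (hT : 2 ≤ T.card) (hA : ∀ σ ∈ A, IsQuasiconvexOn σ T) : T.card - 2 ≤ tupleDep A 2 := by
  have hne : T.Nonempty := Finset.card_pos.mp (by omega)
  have hP : ({T.min' hne, T.max' hne} : Finset (Fin n)).card = 2 :=
    Finset.card_pair (T.min'_lt_max'_of_card (by omega)).ne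
  have hsub : T ⊆ depSet A {T.min' hne, T.max' hne} := fun s hs => by
    simp only [depSet, Finset.mem_filter, Finset.mem_univ, true_and, Finset.mem_insert,
      Finset.mem_singleton, exists_eq_or_imp, exists_eq_left, ← le_max_iff]
    exact fun σ hσ => (hA σ hσ).le_max_min'_max' hne hs
  calc T.card - 2 ≤ dep A {T.min' hne, T.max' hne} := by
        rw [dep, hP]; exact Nat.sub_le_sub_right (Finset.card_le_card hsub) 2
    _ ≤ tupleDep A 2 := dep_le_tupleDep A hP

theorem pair_dependency_large_general (a b : ℕ) :
    ∃ n : ℕ, 2 ≤ n ∧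
      ∀ A : Finset (Equiv.Perm (Fin n)), A.card ≤ a → b - 1 ≤ tupleDep A 2 := by
  have hgrow : id ≤ fun m : ℕ => 2 ^ m := fun m => m.lt_two_pow_self.le
  refine ⟨(2 ^ ·)^[a] (b + 2),
    (by omega : 2 ≤ b + 2).trans (Function.id_le_iterate_of_id_le hgrow a _), fun A hA => ?_⟩
  obtain ⟨T, -, hT, hqc⟩ := Finset.exists_subset_forall_isQuasiconvexOn
    (fun σ : Equiv.Perm _ => ⇑σ) (b + 2) A Finset.univ
    (by simpa using Function.monotone_iterate_of_id_le hgrow hA (b + 2))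
  exact (by omega : b - 1 ≤ T.card - 2).trans (card_sub_two_le_tupleDep A (by omega) hqc)

theorem pair_dependency_large (a b : ℕ) (ha : 0 < a) (hb : 0 < b) :
    ∃ n : ℕ, 2 ≤ n ∧
      ∀ A : Finset (Equiv.Perm (Fin n)), A.card ≤ a → b - 1 ≤ tupleDep A 2 :=
  pair_dependency_large_general a b
end

section
/- Let n and b be positive integers, let A be a set of permutations of {1,…,n} containing the identity permutation, and let u_0 < u_1 < ⋯ < u_b be elements of {1,…,n} such that for every σ ∈ A, either σ(u_i) < σ(u_{i+1}) for all 0 ≤ i ≤ b−1, or σ(u_i) > σ(u_{i+1}) for all 0 ≤ i ≤ b−1. Then d_2(A) ≥ b − 1. -/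
theorem monochromatic_chain_gives_dependency (n b : ℕ) (hn : 0 < n) (hb : 0 < b)
    (A : Finset (Equiv.Perm (Fin n))) (hid : 1 ∈ A)
    (u : Fin (b + 1) → Fin n) (hu : StrictMono u)
    (hmono : ∀ σ ∈ A,
      (∀ i : Fin b, σ (u i.castSucc) < σ (u i.succ)) ∨
      (∀ i : Fin b, σ (u i.succ) < σ (u i.castSucc))) :
    b - 1 ≤ tupleDep A 2 := by
  set P : Finset (Fin n) := {u 0, u (Fin.last b)} with hP
  have hne : u 0 ≠ u (Fin.last b) := by
    intro h
    have := hu.injective h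
    have : (0 : Fin (b+1)) = Fin.last b := this
    simp [Fin.ext_iff] at this
    omega
  have hPcard : P.card = 2 := by
    rw [hP, Finset.card_insert_of_notMem (by simpa using hne), Finset.card_singleton]
  have hsub : ∀ i : Fin (b+1), u i ∈ depSet A P := by
    intro i
    simp only [depSet, Finset.mem_filter, Finset.mem_univ, true_and]
    intro σ hσ
    rcases hmono σ hσ with h | h
    · refine ⟨u (Fin.last b), by simp [hP], ?_⟩
      have hm : Monotone (fun j => σ (u j)) := (Fin.strictMono_iff_lt_succ.mpr h).monotone
      exact hm (Fin.le_last i)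
    · refine ⟨u 0, by simp [hP], ?_⟩
      have hm : Antitone (fun j => σ (u j)) := (Fin.strictAnti_iff_succ_lt.mpr h).antitone
      exact hm (Fin.zero_le i)
  have hcard : b + 1 ≤ (depSet A P).card := by
    have hs : (Finset.univ.image u) ⊆ depSet A P := by
      intro x hx
      simp only [Finset.mem_image, Finset.mem_univ, true_and] at hx
      obtain ⟨i, rfl⟩ := hx
      exact hsub i
    calc b + 1 = (Finset.univ.image u).card := by
          rw [Finset.card_image_of_injective _ hu.injective, Finset.card_univ,
            Fintype.card_fin]
      _ ≤ _ := Finset.card_le_card hs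
  have hdep : b - 1 ≤ dep A P := by
    unfold dep
    omega
  refine hdep.trans (Finset.le_sup ?_)
  rw [Finset.mem_powersetCard]
  exact ⟨Finset.subset_univ _, hPcard⟩
end

section
/- Let n ≥ 2, let A be a set of permutations of {1,…,n}, let v ∈ {1,…,n}, and let P ⊆ {1,…,n−1} be nonempty. Then { ι_v(s) : s ∈ ⟨A/v; P⟩ } ⊆ ⟨A; P^{v+}⟩, i.e., the image under the order-preserving bijection ι_v of the P-dependent set of A/v is contained in the P^{v+}-dependent set of A. -/
/-- `δ_v` : the relabeling map `[n+2] ∖ {v} → [n+1]`, `δ_v w = w` if `w < v` and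
`δ_v w = w - 1` if `w > v` (the value at `w = v` is junk). -/
def delMap {n : ℕ} (v w : Fin (n + 2)) : Fin (n + 1) :=
  if h : (w : ℕ) < (v : ℕ) then ⟨w, by have := v.isLt; omega⟩
  else ⟨(w : ℕ) - 1, by have := w.isLt; omega⟩

/-- `σ/v = δ_{σ(v)} ∘ σ ∘ ι_v`, where `ι_v = Fin.succAbove v` is the order-preserving
bijection `[n+1] → [n+2] ∖ {v}`. -/
def slash {n : ℕ} (σ : Equiv.Perm (Fin (n + 2))) (v : Fin (n + 2)) :
    Fin (n + 1) → Fin (n + 1) :=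
  fun i => delMap (σ v) (σ (Fin.succAbove v i))

lemma delMap_le_delMap {n : ℕ} {c a b : Fin (n + 2)} (ha : a ≠ c) (hb : b ≠ c)
    (h : delMap c a ≤ delMap c b) : a ≤ b := by
  have ha' : (a : ℕ) ≠ (c : ℕ) := fun h' => ha (Fin.ext h')
  have hb' : (b : ℕ) ≠ (c : ℕ) := fun h' => hb (Fin.ext h')
  unfold delMap at h
  rw [Fin.le_def] at *
  split_ifs at h <;> simp_all <;> omega

theorem depSet_slash_subset (n : ℕ) (A : Finset (Equiv.Perm (Fin (n + 2))))
    (v : Fin (n + 2)) (P : Finset (Fin (n + 1))) (hP : P.Nonempty) :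
    (Finset.univ.filter fun s : Fin (n + 1) =>
        ∀ σ ∈ A, ∃ j ∈ P, slash σ v s ≤ slash σ v j).image (Fin.succAbove v)
      ⊆ depSet A (P.image (Fin.succAbove v)) := by
  intro x hx
  simp only [Finset.mem_image, Finset.mem_filter, Finset.mem_univ, true_and] at hx
  obtain ⟨s, hs, rfl⟩ := hx
  simp only [depSet, Finset.mem_filter, Finset.mem_univ, true_and]
  intro σ hσ
  obtain ⟨j, hj, hle⟩ := hs σ hσ
  refine ⟨Fin.succAbove v j, Finset.mem_image_of_mem _ hj, ?_⟩
  have h1 : σ (Fin.succAbove v s) ≠ σ v := fun h =>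
    Fin.succAbove_ne v s (σ.injective h)
  have h2 : σ (Fin.succAbove v j) ≠ σ v := fun h =>
    Fin.succAbove_ne v j (σ.injective h)
  exact delMap_le_delMap h1 h2 hle
end

section
/- Let a, b, p be positive integers and let n₀ ≥ p be a positive integer such that every set A of permutations of {1,…,n₀} with |A| ≤ a satisfies d_p(A) ≥ b − 1. Let m = n₀ + 2⌈n₀/a⌉ − 1. Then every set A of permutations of {1,…,m} with |A| ≤ a + 2 satisfies d_{p+1}(A) ≥ b − 1. -/
/-!
Put `t = ⌈n₀/a⌉`, so that `m = n₀ + 2t - 1` and `n₀ ≤ at`. Each permutation of `[m]` has `t`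
elements in its top `t` positions, and `(a + 2)t > m`, so by pigeonhole some `x` is among the top
`t` for a subfamily `C ⊆ A` of size `|A| - a ≤ 2`. At most `2(t - 1)` elements lie above `x` in a
member of `C`, leaving `n₀` elements `S` below `x` in every member of `C`. Restricting the other
`≤ a` permutations to `S` gives a family on `[n₀]` with a `p`-set `P₀` of dependency `≥ b - 1`;
then `P₀ ∪ {x}` has dependency `≥ b - 1` for `A`, since `⟨A; P₀ ∪ {x}⟩` contains `x` and the
dependent set of `P₀`.
-/

open Finset Function Equiv

theorem Tuple.sort_symm_le_sort_symm_iff {n : ℕ} {α : Type*} [LinearOrder α] {g : Fin n → α}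
    (hg : Injective g) (u v : Fin n) :
    (Tuple.sort g).symm u ≤ (Tuple.sort g).symm v ↔ g u ≤ g v := by
  have hsort : StrictMono (g ∘ Tuple.sort g) :=
    (Tuple.monotone_sort g).strictMono_of_injective (hg.comp (Tuple.sort g).injective)
  simpa using (hsort.le_iff_le (a := (Tuple.sort g).symm u) (b := (Tuple.sort g).symm v)).symm

section Counting

variable {m : ℕ}

theorem card_filter_apply_lt (σ : Perm (Fin m)) (i : Fin m) :
    #{s | σ i < σ s} = m - 1 - σ i := by
  rw [← Fin.card_Ioi]
  exact card_equiv σ (by simp)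

theorem card_filter_le_apply_add (σ : Perm (Fin m)) {t : ℕ} (ht₀ : 0 < t) (ht : t ≤ m) :
    #{s : Fin m | m ≤ σ s + t} = t := by
  calc #{s : Fin m | m ≤ σ s + t} = #(Ici (⟨m - t, by omega⟩ : Fin m)) := by
        refine card_equiv σ fun s => ?_
        simp only [mem_filter, mem_univ, true_and, mem_Ici, Fin.le_def]
        omega
    _ = t := by simp only [Fin.card_Ici]; omega

theorem card_sub_sum_le_card_filter_forall_le (C : Finset (Perm (Fin m))) (x : Fin m) :
    m - 1 - ∑ σ ∈ C, (m - 1 - σ x) ≤ #{s | s ≠ x ∧ ∀ σ ∈ C, σ s ≤ σ x} := by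
  have hcover : univ.erase x ⊆ ({s | s ≠ x ∧ ∀ σ ∈ C, σ s ≤ σ x} : Finset (Fin m)) ∪
      C.biUnion fun σ => {s | σ x < σ s} := by
    intro s hs
    by_cases hlow : ∀ σ ∈ C, σ s ≤ σ x
    · simp_all
    · push Not at hlow
      simp_all
  have hunion := (card_le_card hcover).trans (card_union_le _ _)
  have hbiUnion := card_biUnion_le (s := C) (t := fun σ => {s | σ x < σ s})
  simp only [card_filter_apply_lt, card_erase_of_mem (mem_univ x), card_univ,
    Fintype.card_fin] at hunion hbiUnion
  omega

theorem exists_lt_card_filter_le_apply_add (A : Finset (Perm (Fin m))) {t k : ℕ} (ht₀ : 0 < t)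
    (ht : t ≤ m) (h : m * k < #A * t) : ∃ x : Fin m, k < #{σ ∈ A | m ≤ σ x + t} := by
  by_contra! hle
  have := card_nsmul_le_card_nsmul (fun (σ : Perm (Fin m)) x => m ≤ (σ x : ℕ) + t)
    (s := A) (t := univ) (m := t) (n := k)
    (fun σ _ => (card_filter_le_apply_add σ ht₀ ht).ge) (fun x _ => hle x)
  simp only [smul_eq_mul, card_univ, Fintype.card_fin] at this
  linarith

end Counting

section Restriction

variable {m n : ℕ}

def restrictPerm (σ : Perm (Fin m)) (e : Fin n ↪ Fin m) : Perm (Fin n) :=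
  (Tuple.sort (σ ∘ e)).symm

theorem restrictPerm_le_iff (σ : Perm (Fin m)) (e : Fin n ↪ Fin m) (u v : Fin n) :
    restrictPerm σ e u ≤ restrictPerm σ e v ↔ σ (e u) ≤ σ (e v) :=
  Tuple.sort_symm_le_sort_symm_iff (σ.injective.comp e.injective) u v

variable (A C : Finset (Perm (Fin m))) (e : Fin n ↪ Fin m) {x : Fin m}

theorem insert_map_depSet_subset (hC : ∀ σ ∈ C, ∀ u, σ (e u) ≤ σ x) (P₀ : Finset (Fin n)) :
    insert x ((depSet ((A \ C).image (restrictPerm · e)) P₀).map e) ⊆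
      depSet A (insert x (P₀.map e)) := by
  intro s hs
  simp only [depSet, mem_insert, mem_map, mem_filter, mem_univ, true_and, mem_image,
    mem_sdiff, forall_exists_index, and_imp] at hs ⊢
  intro σ hσA
  rcases hs with rfl | ⟨u, hu, rfl⟩
  · exact ⟨s, by simp, le_rfl⟩
  by_cases hσC : σ ∈ C
  · exact ⟨x, by simp, hC σ hσC u⟩
  obtain ⟨j, hj, hle⟩ := hu _ σ hσA hσC rfl
  exact ⟨e j, by simp [hj], (restrictPerm_le_iff σ e u j).1 hle⟩

theorem dep_image_restrictPerm_le (hx : ∀ u, e u ≠ x) (hC : ∀ σ ∈ C, ∀ u, σ (e u) ≤ σ x)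
    (P₀ : Finset (Fin n)) :
    dep ((A \ C).image (restrictPerm · e)) P₀ ≤ dep A (insert x (P₀.map e)) := by
  have hxmap (T : Finset (Fin n)) : x ∉ T.map e := by simp [hx]
  have hcard := card_le_card (insert_map_depSet_subset A C e hC P₀)
  rw [card_insert_of_notMem (hxmap _), card_map] at hcard
  rw [dep, dep, card_insert_of_notMem (hxmap _), card_map]
  omega

theorem tupleDep_image_restrictPerm_le (hx : ∀ u, e u ≠ x)
    (hC : ∀ σ ∈ C, ∀ u, σ (e u) ≤ σ x) (p : ℕ) :
    tupleDep ((A \ C).image (restrictPerm · e)) p ≤ tupleDep A (p + 1) := by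
  refine Finset.sup_le fun P₀ hP₀ => (dep_image_restrictPerm_le A C e hx hC P₀).trans ?_
  refine le_sup (mem_powersetCard.2 ⟨subset_univ _, ?_⟩)
  rw [card_insert_of_notMem (by simp [hx]), card_map, (mem_powersetCard.1 hP₀).2]

end Restriction

theorem Finset.exists_embedding_forall_of_le_card_filter {α : Type*} [Fintype α] {q : α → Prop}
    [DecidablePred q] {n : ℕ} (h : n ≤ #{s | q s}) : ∃ e : Fin n ↪ α, ∀ u, q (e u) :=
  ⟨(Fin.castLEEmb h).trans ((equivFin _).symm.toEmbedding.trans (Embedding.subtype _)),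
    fun _ => (mem_filter.1 ((equivFin _).symm _).2).2⟩

theorem exists_many_below_pivot {m n₀ a t : ℕ} (A : Finset (Perm (Fin m))) (hA : #A ≤ a + 2)
    (hat : n₀ ≤ a * t) (ht₀ : 0 < t) (hm : m + 1 = n₀ + 2 * t) :
    ∃ x : Fin m, ∃ C ⊆ A, #A ≤ a + #C ∧ n₀ ≤ #{s | s ≠ x ∧ ∀ σ ∈ C, σ s ≤ σ x} := by
  obtain ⟨x, hx⟩ : ∃ x : Fin m, #A - a ≤ #{σ ∈ A | m ≤ σ x + t} := by
    rcases Nat.eq_zero_or_pos (#A - a) with hAa | hAa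
    · exact ⟨⟨0, by omega⟩, by omega⟩
    have hpigeon : m * (#A - a - 1) < #A * t := by
      rcases (by omega : #A = a + 1 ∨ #A = a + 2) with hcard | hcard
      · rw [hcard, show a + 1 - a - 1 = 0 by omega, mul_zero]
        positivity
      · rw [hcard, show a + 2 - a - 1 = 1 by omega]
        nlinarith
    obtain ⟨x, hx⟩ := exists_lt_card_filter_le_apply_add A ht₀ (by omega) hpigeon
    exact ⟨x, by omega⟩
  obtain ⟨C, hCsub, hCcard⟩ := exists_subset_card_eq hx
  refine ⟨x, C, hCsub.trans (filter_subset _ _), by omega, ?_⟩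
  have hsum : ∑ σ ∈ C, (m - 1 - σ x) ≤ #C * (t - 1) := by
    refine sum_le_card_nsmul C _ _ fun σ hσ => ?_
    have := (mem_filter.1 (hCsub hσ)).2
    omega
  have hC2 : #C * (t - 1) ≤ 2 * (t - 1) := Nat.mul_le_mul_right _ (by omega)
  have := card_sub_sum_le_card_filter_forall_le C x
  omega

theorem dependency_recurrence_general (a b p n₀ : ℕ) (ha : 0 < a) (hp : 0 < p)
    (hn₀ : p ≤ n₀)
    (H : ∀ A : Finset (Equiv.Perm (Fin n₀)), A.card ≤ a → b - 1 ≤ tupleDep A p) :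
    ∀ A : Finset (Equiv.Perm (Fin (n₀ + 2 * ((n₀ + a - 1) / a) - 1))),
      A.card ≤ a + 2 → b - 1 ≤ tupleDep A (p + 1) := by
  intro A hA
  have hat : n₀ ≤ a * ((n₀ + a - 1) / a) := le_smul_ceilDiv ha
  have ht₀ : 0 < (n₀ + a - 1) / a := Nat.div_pos (by omega) ha
  obtain ⟨x, C, hCA, hAC, hlow⟩ := exists_many_below_pivot A hA hat ht₀ (by omega)
  obtain ⟨e, he⟩ := exists_embedding_forall_of_le_card_filter hlow
  calc b - 1 ≤ tupleDep ((A \ C).image (restrictPerm · e)) p :=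
        H _ (card_image_le.trans (by rw [card_sdiff_of_subset hCA]; omega))
    _ ≤ tupleDep A (p + 1) :=
        tupleDep_image_restrictPerm_le A C e (fun u => (he u).1)
          (fun σ hσ u => (he u).2 σ hσ) p

theorem dependency_recurrence (a b p n₀ : ℕ) (ha : 0 < a) (hb : 0 < b) (hp : 0 < p)
    (hn₀ : p ≤ n₀)
    (H : ∀ A : Finset (Equiv.Perm (Fin n₀)), A.card ≤ a → b - 1 ≤ tupleDep A p) :
    ∀ A : Finset (Equiv.Perm (Fin (n₀ + 2 * ((n₀ + a - 1) / a) - 1))),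
      A.card ≤ a + 2 → b - 1 ≤ tupleDep A (p + 1) :=
  dependency_recurrence_general a b p n₀ ha hp hn₀ H
end

section
/- Let a, b be positive integers and let n₀ ≥ 2 be a positive integer such that every set A of permutations of {1,…,n₀} with |A| ≤ a satisfies d_2(A) ≥ b − 1. Then for every integer p ≥ 2, setting m_p = n₀ + (2⌈n₀/a⌉ − 1)(p − 2), every set A of permutations of {1,…,m_p} with |A| ≤ a + 2(p − 2) satisfies d_p(A) ≥ b − 1. -/
/-!
Induction on `p`. Let `A` act on `N = M + (2q - 1)` points with `|A| ≤ k + 2` and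
`N < q (k + 2)`, and let `T_σ` be the set of positions where `σ` takes its `q` largest values.
Either two of these sets meet in a point `x`, and `D = T_σ₁ ∪ T_σ₂` has at most `2q - 1`
elements, or they are pairwise disjoint, so `|A| ≤ k + 1` and `D = T_σ` for a single `σ ∈ A`.
Either way, removing a set `R` of at most two permutations leaves at most `k`, and every
`σ ∈ R` ranks `x` above all `M` points outside `D`. Standardising the remaining permutations on
those `M` points, the induction hypothesis yields `P'` of size `p` whose dependent set has
`p + d` elements; then `P' ∪ {x}` has a dependent set of `p + 1 + d` elements for `A`, since
`x` dominates the complement of `D` for every `σ ∈ R`. For `q = ⌈n₀ / a⌉`,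
`M = n₀ + (2q - 1)(p - 2)` and `k = a + 2(p - 2)` the condition `N < q (k + 2)` follows from
`n₀ ≤ a q`.
-/

open Finset Function Equiv

lemma mem_depSet {n : ℕ} {A : Finset (Perm (Fin n))} {P : Finset (Fin n)} {s : Fin n} :
    s ∈ depSet A P ↔ ∀ σ ∈ A, ∃ j ∈ P, σ s ≤ σ j := by
  simp [depSet]

lemma subset_depSet {n : ℕ} (A : Finset (Perm (Fin n))) (P : Finset (Fin n)) :
    P ⊆ depSet A P := fun s hs => mem_depSet.2 fun _ _ => ⟨s, hs, le_rfl⟩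

lemma le_tupleDep {n p d : ℕ} {A : Finset (Perm (Fin n))} {P : Finset (Fin n)}
    (hP : #P = p) (h : p + d ≤ #(depSet A P)) : d ≤ tupleDep A p :=
  calc d ≤ dep A P := by rw [dep]; omega
    _ ≤ tupleDep A p := le_sup (mem_powersetCard_univ.2 hP)

lemma exists_of_le_tupleDep {n p d : ℕ} {A : Finset (Perm (Fin n))} (hd : 0 < d)
    (h : d ≤ tupleDep A p) : ∃ P : Finset (Fin n), #P = p ∧ p + d ≤ #(depSet A P) := by
  obtain ⟨P, hP, hdP⟩ := (Finset.le_sup_iff hd).1 h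
  have hPp : #P = p := mem_powersetCard_univ.1 hP
  have := card_le_card (subset_depSet A P)
  exact ⟨P, hPp, by rw [dep] at hdP; omega⟩

def orderPattern {n : ℕ} {α : Type*} [LinearOrder α] (f : Fin n → α) : Perm (Fin n) :=
  (Tuple.sort f).symm

lemma orderPattern_le_orderPattern_iff {n : ℕ} {α : Type*} [LinearOrder α] {f : Fin n → α}
    (hf : Injective f) {i j : Fin n} : orderPattern f i ≤ orderPattern f j ↔ f i ≤ f j := by
  have hmono : StrictMono (f ∘ Tuple.sort f) :=
    (Tuple.monotone_sort f).strictMono_of_injective (hf.comp (Tuple.sort f).injective)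
  simpa [orderPattern] using (hmono.le_iff_le (a := orderPattern f i) (b := orderPattern f j)).symm

lemma insert_map_depSet_subset_s18 {M N : ℕ} (e : Fin M ↪ Fin N) (A : Finset (Perm (Fin N)))
    {R : Finset (Perm (Fin N))} {x : Fin N} (hR : ∀ σ ∈ R, ∀ i, σ (e i) ≤ σ x) (P : Finset (Fin M)) :
    insert x ((depSet ((A \ R).image fun σ : Perm (Fin N) => orderPattern (σ ∘ e)) P).map e) ⊆
      depSet A (insert x (P.map e)) := by
  intro s hs
  rcases mem_insert.1 hs with rfl | hs
  · exact subset_depSet _ _ (mem_insert_self _ _)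
  obtain ⟨i, hi, rfl⟩ := mem_map.1 hs
  refine mem_depSet.2 fun σ hσ => ?_
  by_cases hσR : σ ∈ R
  · exact ⟨x, mem_insert_self _ _, hR σ hσR i⟩
  obtain ⟨j, hj, hij⟩ := mem_depSet.1 hi _ (mem_image_of_mem _ (mem_sdiff.2 ⟨hσ, hσR⟩))
  exact ⟨e j, mem_insert_of_mem (mem_map_of_mem e hj),
    (orderPattern_le_orderPattern_iff (σ.injective.comp e.injective)).1 hij⟩

lemma le_tupleDep_succ_of_dominated {M N p d : ℕ} (e : Fin M ↪ Fin N) {x : Fin N}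
    (hx : ∀ i, e i ≠ x) {A R : Finset (Perm (Fin N))} (hR : ∀ σ ∈ R, ∀ i, σ (e i) ≤ σ x)
    (h : d ≤ tupleDep ((A \ R).image fun σ : Perm (Fin N) => orderPattern (σ ∘ e)) p) :
    d ≤ tupleDep A (p + 1) := by
  rcases d.eq_zero_or_pos with rfl | hd
  · exact Nat.zero_le _
  obtain ⟨P, hP, hPd⟩ := exists_of_le_tupleDep hd h
  have hxP : ∀ Q : Finset (Fin M), x ∉ Q.map e := fun Q hxQ => by
    obtain ⟨i, -, hi⟩ := mem_map.1 hxQ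
    exact hx i hi
  have hcard := card_le_card (insert_map_depSet_subset_s18 e A hR P)
  rw [card_insert_of_notMem (hxP _), card_map] at hcard
  exact le_tupleDep (by rw [card_insert_of_notMem (hxP P), card_map, hP]) (by omega)

def topSet {N : ℕ} (σ : Perm (Fin N)) (v : Fin N) : Finset (Fin N) := {s | v ≤ σ s}

lemma card_topSet {N : ℕ} (σ : Perm (Fin N)) (v : Fin N) : #(topSet σ v) = N - v := by
  rw [← Fin.card_Ici]
  exact card_equiv σ fun s => by simp [topSet]

lemma le_of_mem_topSet_of_notMem {N : ℕ} {σ : Perm (Fin N)} {v x s : Fin N}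
    (hx : x ∈ topSet σ v) (hs : s ∉ topSet σ v) : σ s ≤ σ x := by
  simp only [topSet, mem_filter, mem_univ, true_and] at hx hs
  exact (lt_of_not_ge hs).le.trans hx

lemma exists_dominated {N q k : ℕ} (hqN : q ≤ N) (hN : N < q * (k + 2))
    (A : Finset (Perm (Fin N))) (hA : #A ≤ k + 2) :
    ∃ R : Finset (Perm (Fin N)), #(A \ R) ≤ k ∧ ∃ x D, x ∈ D ∧ #D ≤ 2 * q - 1 ∧
      ∀ σ ∈ R, ∀ s ∉ D, σ s ≤ σ x := by
  have hq : 0 < q := Nat.pos_of_ne_zero (by rintro rfl; simp at hN)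
  set v : Fin N := ⟨N - q, by omega⟩
  have hT : ∀ σ, #(topSet σ v) = q := fun σ => by rw [card_topSet]; simp only [v]; omega
  by_cases hpair : ∃ σ₁ ∈ A, ∃ σ₂ ∈ A, σ₁ ≠ σ₂ ∧ ¬Disjoint (topSet σ₁ v) (topSet σ₂ v)
  · obtain ⟨σ₁, h₁, σ₂, h₂, hne, hnd⟩ := hpair
    obtain ⟨x, hx₁, hx₂⟩ := not_disjoint_iff.1 hnd
    refine ⟨{σ₁, σ₂}, ?_, x, topSet σ₁ v ∪ topSet σ₂ v, mem_union_left _ hx₁, ?_, ?_⟩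
    · rw [card_sdiff_of_subset (insert_subset h₁ (singleton_subset_iff.2 h₂)), card_pair hne]
      omega
    · have hunion := card_union_add_card_inter (topSet σ₁ v) (topSet σ₂ v)
      have hinter := card_pos.2 ⟨x, mem_inter.2 ⟨hx₁, hx₂⟩⟩
      rw [hT, hT] at hunion
      omega
    · simp only [mem_insert, mem_singleton, mem_union, not_or]
      rintro σ (rfl | rfl) s ⟨hs₁, hs₂⟩
      exacts [le_of_mem_topSet_of_notMem hx₁ hs₁, le_of_mem_topSet_of_notMem hx₂ hs₂]
  push Not at hpair
  have hAq : #A * q ≤ N := by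
    calc #A * q = #(A.biUnion (topSet · v)) := by
          rw [card_biUnion hpair, sum_const_nat fun σ _ => hT σ]
      _ ≤ N := card_le_univ _ |>.trans_eq (Fintype.card_fin N)
  have hAk : #A ≤ k + 1 := by
    by_contra! h
    nlinarith
  rcases A.eq_empty_or_nonempty with rfl | ⟨σ, hσ⟩
  · exact ⟨∅, by simp, v, {v}, mem_singleton_self v, by simp only [card_singleton]; omega, by simp⟩
  obtain ⟨x, hx⟩ : (topSet σ v).Nonempty := card_pos.1 (by rw [hT]; exact hq)
  refine ⟨{σ}, ?_, x, topSet σ v, hx, by rw [hT]; omega, ?_⟩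
  · rw [card_sdiff_of_subset (singleton_subset_iff.2 hσ), card_singleton]
    omega
  · simp only [mem_singleton]
    rintro _ rfl s hs
    exact le_of_mem_topSet_of_notMem hx hs

theorem le_tupleDep_succ {M k p d q : ℕ} (hM : M + (2 * q - 1) < q * (k + 2))
    (ih : ∀ A : Finset (Perm (Fin M)), #A ≤ k → d ≤ tupleDep A p)
    (A : Finset (Perm (Fin (M + (2 * q - 1))))) (hA : #A ≤ k + 2) :
    d ≤ tupleDep A (p + 1) := by
  have hq : 0 < q := Nat.pos_of_ne_zero (by rintro rfl; simp at hM)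
  obtain ⟨R, hR, x, D, hxD, hD, hdom⟩ := exists_dominated (by omega) hM A hA
  have hMD : Fintype.card (Fin M) ≤ Fintype.card (Dᶜ : Finset _) := by
    rw [Fintype.card_coe, card_compl]
    simp only [Fintype.card_fin]
    omega
  obtain ⟨e⟩ := Embedding.nonempty_of_card_le hMD
  have heD : ∀ i, (e i : Fin _) ∉ D := fun i => mem_compl.1 (e i).2
  exact le_tupleDep_succ_of_dominated (e.trans (Embedding.subtype _))
    (fun i hi => heD i (by rwa [← hi] at hxD)) (fun σ hσ i => hdom σ hσ _ (heD i))
    (ih _ (card_image_le.trans hR))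

theorem dependency_linear_growth_general (a b n₀ : ℕ) (ha : 0 < a) (hn₀ : 2 ≤ n₀)
    (H : ∀ A : Finset (Equiv.Perm (Fin n₀)), A.card ≤ a → b - 1 ≤ tupleDep A 2) :
    ∀ p : ℕ, 2 ≤ p →
      ∀ A : Finset (Equiv.Perm (Fin (n₀ + (2 * ((n₀ + a - 1) / a) - 1) * (p - 2)))),
        A.card ≤ a + 2 * (p - 2) → b - 1 ≤ tupleDep A p := by
  set q := (n₀ + a - 1) / a
  have hq : n₀ ≤ a * q := le_smul_ceilDiv ha
  clear_value q
  obtain ⟨r, rfl⟩ : ∃ r, q = r + 1 := Nat.exists_eq_add_one.2 (by nlinarith)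
  have hdep : ∀ t : ℕ, ∀ A : Finset (Perm (Fin (n₀ + (2 * (r + 1) - 1) * t))),
      #A ≤ a + 2 * t → b - 1 ≤ tupleDep A (t + 2) := by
    intro t
    induction t with
    | zero => simpa using H
    | succ t ih =>
      rw [mul_add_one, ← add_assoc]
      intro A hA
      refine le_tupleDep_succ (k := a + 2 * t) ?_ ih A (by omega)
      rw [show 2 * (r + 1) - 1 = 2 * r + 1 by omega]
      nlinarith
  intro p hp
  obtain ⟨t, rfl⟩ := Nat.exists_eq_add_of_le' hp
  rw [Nat.add_sub_cancel]
  exact hdep t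

theorem dependency_linear_growth (a b n₀ : ℕ) (ha : 0 < a) (hb : 0 < b) (hn₀ : 2 ≤ n₀)
    (H : ∀ A : Finset (Equiv.Perm (Fin n₀)), A.card ≤ a → b - 1 ≤ tupleDep A 2) :
    ∀ p : ℕ, 2 ≤ p →
      ∀ A : Finset (Equiv.Perm (Fin (n₀ + (2 * ((n₀ + a - 1) / a) - 1) * (p - 2)))),
        A.card ≤ a + 2 * (p - 2) → b - 1 ≤ tupleDep A p :=
  dependency_linear_growth_general a b n₀ ha hn₀ H
end

section
/- For every integer d ≥ 4 there exist a set S ⊆ ℝ^d and an indexed family B_1, …, B_n of axis-parallel boxes in ℝ^d (repetitions among the boxes allowed) with n = ⌊√d⌋·⌊d/2⌋, such that S ∩ B_j ∩ B_k ≠ ∅ for all j, k ∈ {1,…,n}, but there is no set J ⊆ {1,…,n} with |J| = d+1 and S ∩ ⋂_{j∈J} B_j ≠ ∅. -/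
theorem lower_bound_example (d : ℕ) (hd : 4 ≤ d) :
    ∃ (S : Set (Fin d → ℝ)) (B : Fin (Nat.sqrt d * (d / 2)) → Set (Fin d → ℝ)),
      (∀ j, IsBox (B j)) ∧
      (∀ j k, (S ∩ (B j ∩ B k)).Nonempty) ∧
      ¬ ∃ J : Finset (Fin (Nat.sqrt d * (d / 2))),
          J.card = d + 1 ∧ (S ∩ ⋂ j ∈ J, B j).Nonempty := by
  set s := Nat.sqrt d with hs
  set m := d / 2 with hm
  have hm0 : 0 < m := by omega
  have hmd : m ≤ d := by omega
  have hs2 : 2 ≤ s := Nat.le_sqrt.mpr (by omega)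
  have hssd : s * s ≤ d := Nat.sqrt_le d
  set τ : Fin (s * m) → ℕ := fun j => (j : ℕ) % m with hτdef
  have hτ : ∀ j, τ j < d := fun j => lt_of_lt_of_le (Nat.mod_lt _ hm0) hmd
  -- witness points : 1 at coordinates r₁, r₂, zero elsewhere
  set P : ℕ → ℕ → (Fin d → ℝ) :=
    fun r₁ r₂ i => if (i : ℕ) = r₁ ∨ (i : ℕ) = r₂ then 1 else 0 with hPdef
  -- lower corner of a box
  set A : ℕ → (Fin d → ℝ) := fun r i => if (i : ℕ) = r then 1 else -1 with hAdef
  have hmem : ∀ r₁ r₂ r : ℕ, r < d →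
      (P r₁ r₂ ∈ Set.Icc (A r) (fun _ => (1 : ℝ)) ↔ (r = r₁ ∨ r = r₂)) := by
    intro r₁ r₂ r hr
    constructor
    · rintro ⟨h1, _⟩
      have := h1 ⟨r, hr⟩
      simp only [hPdef, hAdef, if_pos rfl] at this
      by_contra hcon
      push_neg at hcon
      rw [if_neg] at this
      · linarith
      · simpa using hcon
    · intro hror
      constructor
      · intro i
        simp only [hPdef, hAdef]
        by_cases hi : (i : ℕ) = r
        · rw [if_pos hi, if_pos (by omega)]
        · rw [if_neg hi]
          split <;> norm_num
      · intro i
        simp only [hPdef]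
        split <;> norm_num
  refine ⟨{x | ∃ r₁ r₂ : ℕ, r₁ < m ∧ r₂ < m ∧ x = P r₁ r₂},
    fun j => Set.Icc (A (τ j)) (fun _ => (1 : ℝ)), ?_, ?_, ?_⟩
  · intro j
    exact ⟨A (τ j), fun _ => 1, fun i => by
      simp only [hAdef]; split <;> norm_num, rfl⟩
  · intro j k
    refine ⟨P (τ j) (τ k), ⟨τ j, τ k, Nat.mod_lt _ hm0, Nat.mod_lt _ hm0, rfl⟩,
      (hmem _ _ _ (hτ j)).mpr (Or.inl rfl), (hmem _ _ _ (hτ k)).mpr (Or.inr rfl)⟩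
  · rintro ⟨J, hJcard, p, hpS, hpB⟩
    obtain ⟨r₁, r₂, -, -, rfl⟩ := hpS
    have hj : ∀ j ∈ J, τ j = r₁ ∨ τ j = r₂ := by
      intro j hjJ
      exact (hmem r₁ r₂ (τ j) (hτ j)).mp (Set.mem_iInter₂.mp hpB j hjJ)
    have hdiv : ∀ j : Fin (s * m), (j : ℕ) / m < s := by
      intro j
      exact Nat.div_lt_of_lt_mul (Nat.lt_of_lt_of_eq j.isLt (Nat.mul_comm s m))
    have hcard : J.card ≤ Fintype.card (Bool × Fin s) := by
      apply Finset.card_le_card_of_injOn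
        (fun j => ((decide (τ j = r₁), ⟨(j : ℕ) / m, hdiv j⟩) : Bool × Fin s))
        (fun _ _ => Finset.mem_univ _)
      intro j hjm k hkm heq
      simp only [Prod.mk.injEq, Fin.mk.injEq, decide_eq_decide] at heq
      obtain ⟨h1, h2⟩ := heq
      have hmodeq : τ j = τ k := by
        rcases hj j hjm with h | h <;> rcases hj k hkm with h' | h'
        · rw [h, h']
        · rw [h, ← h1.mp h]
        · rw [h1.mpr h', h']
        · rw [h, h']
      have hmm : (j : ℕ) % m = (k : ℕ) % m := hmodeq
      have : (j : ℕ) = (k : ℕ) := by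
        have hj' := Nat.div_add_mod (j : ℕ) m
        have hk' := Nat.div_add_mod (k : ℕ) m
        rw [h2] at hj'
        omega
      exact Fin.ext this
    simp only [Fintype.card_prod, Fintype.card_bool, Fintype.card_fin] at hcard
    have : 2 * s ≤ s * s := Nat.mul_le_mul_right s hs2
    omega
end
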